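/- arXiv:math/9803098 — 9 statements merged into one kernel-verified Lean document; each statement's English description precedes it below -/
import Mathlib

section
/- If A is a singular irreducible n×n M-matrix and x is a nonzero vector with Ax = 0, then Ax being the zero vector forces every vector y with Ay ≠ 0 and Ay having no negative entries to be impossible; equivalently: if A is a singular irreducible M-matrix and v is a nonzero vector such that Av ≥ 0 entrywise, then Av = 0. In particular, for any nonzero vector u, if Au ≠ 0 then Au has both a positive and a negative entry. -/
open Matrix

/-- The spectral radius of a real square matrix: the supremum of the moduli of its
complex eigenvalues. -/
noncomputable def specRad {m : Type*} [Fintype m] [DecidableEq m]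
    (P : Matrix m m ℝ) : ℝ :=
  sSup {r : ℝ | ∃ μ ∈ spectrum ℂ (P.map (Complex.ofReal)), r = ‖μ‖}

/-- `A` is an M-matrix: `A = α • 1 - P` with `P` entrywise nonnegative and
`α` at least the spectral radius of `P`. -/
def IsMMatrix {m : Type*} [Fintype m] [DecidableEq m] (A : Matrix m m ℝ) : Prop :=
  ∃ (α : ℝ) (P : Matrix m m ℝ), (∀ i j, 0 ≤ P i j) ∧ specRad P ≤ α ∧
    A = α • (1 : Matrix m m ℝ) - P

/-- Access relation in the directed graph of `A` (edge `(i,j)` iff `A i j ≠ 0`);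
the empty path gives access from each vertex to itself. -/
def Access {n : ℕ} (A : Matrix (Fin n) (Fin n) ℝ) : Fin n → Fin n → Prop :=
  Relation.ReflTransGen (fun i j => A i j ≠ 0)

/-- `S` is a class of `A`: a strongly connected component of the directed graph of `A`. -/
def IsClass {n : ℕ} (A : Matrix (Fin n) (Fin n) ℝ) (S : Finset (Fin n)) : Prop :=
  ∃ p : Fin n, ∀ q : Fin n, q ∈ S ↔ (Access A p q ∧ Access A q p)

/-- `S` is a singular class of `A`: a class whose principal submatrix is singular. -/
def IsSingClass {n : ℕ} (A : Matrix (Fin n) (Fin n) ℝ) (S : Finset (Fin n)) : Prop :=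
  IsClass A S ∧
    (A.submatrix (fun i : S => (i : Fin n)) (fun j : S => (j : Fin n))).det = 0

/-- `j` is the maximum of some singular class of `A`. -/
def IsSingMax {n : ℕ} (A : Matrix (Fin n) (Fin n) ℝ) (j : Fin n) : Prop :=
  ∃ S : Finset (Fin n), IsSingClass A S ∧ j ∈ S ∧ ∀ k ∈ S, k ≤ j

/-- Lower triangular matrix. -/
def LowerTri {n : ℕ} (X : Matrix (Fin n) (Fin n) ℝ) : Prop :=
  ∀ i j : Fin n, i < j → X i j = 0

/-- Upper triangular matrix. -/
def UpperTri {n : ℕ} (X : Matrix (Fin n) (Fin n) ℝ) : Prop :=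
  ∀ i j : Fin n, j < i → X i j = 0


open Filter Finset
open scoped ENNReal NNReal

section Aux


attribute [local instance] Matrix.linftyOpNormedAddCommGroup Matrix.linftyOpSemiNormedRing
  Matrix.linftyOpNormedRing Matrix.linftyOpNormedSpace Matrix.linftyOpNormedAlgebra

variable {n : ℕ}

lemma specRad_nonneg (P : Matrix (Fin n) (Fin n) ℝ) : 0 ≤ specRad P :=
  Real.sSup_nonneg (by rintro r ⟨μ, _, rfl⟩; positivity)

lemma spectrum_transpose (M : Matrix (Fin n) (Fin n) ℂ) : spectrum ℂ Mᵀ = spectrum ℂ M := by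
  ext μ
  have key : (algebraMap ℂ (Matrix (Fin n) (Fin n) ℂ) μ - Mᵀ)
      = (algebraMap ℂ (Matrix (Fin n) (Fin n) ℂ) μ - M)ᵀ := by
    rw [Matrix.transpose_sub]
    congr 1
    rw [Algebra.algebraMap_eq_smul_one, Matrix.transpose_smul, Matrix.transpose_one]
  rw [spectrum.mem_iff, spectrum.mem_iff, key, Matrix.isUnit_iff_isUnit_det,
    Matrix.det_transpose, ← Matrix.isUnit_iff_isUnit_det]

lemma specRad_transpose (P : Matrix (Fin n) (Fin n) ℝ) : specRad Pᵀ = specRad P := by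
  unfold specRad
  rw [show Pᵀ.map Complex.ofReal = (P.map Complex.ofReal)ᵀ from Matrix.transpose_map,
    spectrum_transpose]

lemma pow_entry_nonneg (Q : Matrix (Fin n) (Fin n) ℝ) (hQ : ∀ i j, 0 ≤ Q i j) :
    ∀ (k : ℕ) (i j : Fin n), 0 ≤ (Q ^ k) i j := by
  intro k
  induction k with
  | zero =>
    intro i j
    by_cases h : i = j <;> simp [Matrix.one_apply, h]
  | succ k ih =>
    intro i j
    rw [pow_succ, Matrix.mul_apply]
    exact Finset.sum_nonneg fun l _ => mul_nonneg (ih i l) (hQ l j)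

/-- Collatz–Wielandt type lower bound for the spectral radius. -/
lemma le_specRad_of_mulVec_le (hn : 0 < n) (Q : Matrix (Fin n) (Fin n) ℝ)
    (hQ : ∀ i j, 0 ≤ Q i j) (x : Fin n → ℝ) (hx : ∀ i, 0 ≤ x i)
    (i0 : Fin n) (hx0 : 0 < x i0) (β : ℝ) (hβ : 0 < β)
    (hle : ∀ i, β * x i ≤ Q.mulVec x i) : β ≤ specRad Q := by
  by_contra hcon
  push_neg at hcon
  haveI : Nonempty (Fin n) := Fin.pos_iff_nonempty.mp hn
  set Qc := Q.map (Complex.ofReal) with hQc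
  haveI : Nontrivial (Matrix (Fin n) (Fin n) ℂ) := by
    refine ⟨0, 1, fun h => ?_⟩
    have := congrFun (congrFun h i0) i0
    simp [Matrix.one_apply] at this
  -- all eigenvalues are bounded by specRad
  have hbdd : ∀ z ∈ spectrum ℂ Qc, ‖z‖ ≤ specRad Q := by
    intro z hz
    have hmem : ‖z‖ ∈ {r : ℝ | ∃ μ ∈ spectrum ℂ Qc, r = ‖μ‖} :=
      ⟨z, hz, rfl⟩
    have hb : BddAbove {r : ℝ | ∃ μ ∈ spectrum ℂ Qc, r = ‖μ‖} := by
      refine ⟨‖Qc‖, ?_⟩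
      rintro r ⟨μ, hμ, rfl⟩
      simpa using spectrum.norm_le_norm_of_mem hμ
    exact le_csSup hb hmem
  -- spectral radius < β
  have hρ : spectralRadius ℂ Qc < ENNReal.ofReal β := by
    have h1 : spectralRadius ℂ Qc < (β.toNNReal : ℝ≥0∞) := by
      apply spectrum.spectralRadius_lt_of_forall_lt
      intro z hz
      have h2 : ‖z‖ < β := lt_of_le_of_lt (hbdd z hz) hcon
      have h3 : ‖z‖₊ = Real.toNNReal ‖z‖ := by rw [← coe_nnnorm, Real.toNNReal_coe]
      rw [h3]
      exact (Real.toNNReal_lt_toNNReal_iff hβ).mpr h2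
    simpa [ENNReal.ofReal] using h1
  have hρtop : spectralRadius ℂ Qc ≠ ⊤ := ne_top_of_lt hρ
  set ρ := (spectralRadius ℂ Qc).toReal with hρdef
  have hρ0 : 0 ≤ ρ := ENNReal.toReal_nonneg
  have hρβ : ρ < β := by
    rwa [ENNReal.lt_ofReal_iff_toReal_lt hρtop] at hρ
  set γ : ℝ := (ρ + β) / 2 with hγdef
  have hγ0 : 0 < γ := by positivity
  have hγβ : γ < β := by simp only [hγdef]; linarith
  have hργ : spectralRadius ℂ Qc < ENNReal.ofReal γ := by
    rw [ENNReal.lt_ofReal_iff_toReal_lt hρtop]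
    simp only [hγdef, ← hρdef]; linarith
  -- Gelfand formula: eventually ‖Qc ^ k‖ ≤ γ ^ k
  have hg := spectrum.pow_nnnorm_pow_one_div_tendsto_nhds_spectralRadius Qc
  have hev : ∀ᶠ k : ℕ in atTop, (‖Qc ^ k‖₊ : ℝ≥0∞) ^ (1 / (k : ℝ)) < ENNReal.ofReal γ :=
    hg.eventually_lt_const hργ
  have hev' : ∀ᶠ k in atTop, ‖Qc ^ k‖ ≤ γ ^ k := by
    filter_upwards [hev, eventually_ge_atTop 1] with k hk hk1
    have hk0 : (k : ℝ) ≠ 0 := Nat.cast_ne_zero.mpr (by omega)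
    have h1 : ((‖Qc ^ k‖₊ : ℝ≥0∞) ^ (1 / (k : ℝ))) ^ (k : ℝ)
        ≤ (ENNReal.ofReal γ) ^ (k : ℝ) := ENNReal.rpow_le_rpow hk.le (by positivity)
    rw [← ENNReal.rpow_mul, one_div_mul_cancel hk0, ENNReal.rpow_one,
      ENNReal.rpow_natCast, ← ENNReal.ofReal_pow hγ0.le] at h1
    have h2 : ‖Qc ^ k‖₊ ≤ (γ ^ k).toNNReal := by
      rwa [ENNReal.ofReal, ENNReal.coe_le_coe] at h1
    calc ‖Qc ^ k‖ = (‖Qc ^ k‖₊ : ℝ) := (coe_nnnorm _).symm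
      _ ≤ ((γ ^ k).toNNReal : ℝ) := NNReal.coe_le_coe.mpr h2
      _ = γ ^ k := Real.coe_toNNReal _ (by positivity)
  -- lower bound: β ^ k * x i0 ≤ ‖Qc ^ k‖ * C
  have hmapk : ∀ k : ℕ, Qc ^ k = (Q ^ k).map Complex.ofReal := by
    intro k
    have : Qc = Complex.ofRealHom.mapMatrix Q := rfl
    rw [this, ← map_pow]
    rfl
  have hlow : ∀ (k : ℕ) (i : Fin n), β ^ k * x i ≤ (Q ^ k).mulVec x i := by
    intro k
    induction k with
    | zero => intro i; simp [Matrix.one_mulVec]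
    | succ k ih =>
      intro i
      have h1 : (Q ^ (k + 1)).mulVec x i = (Q ^ k).mulVec (Q.mulVec x) i := by
        rw [pow_succ, ← Matrix.mulVec_mulVec]
      rw [h1]
      have h2 : ∀ j, β * x j ≤ Q.mulVec x j := hle
      have h3 : (Q ^ k).mulVec (fun j => β * x j) i ≤ (Q ^ k).mulVec (Q.mulVec x) i := by
        simp only [Matrix.mulVec, dotProduct]
        exact Finset.sum_le_sum fun j _ =>
          mul_le_mul_of_nonneg_left (h2 j) (pow_entry_nonneg Q hQ k i j)
      have h4 : (Q ^ k).mulVec (fun j => β * x j) i = β * ((Q ^ k).mulVec x i) := by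
        simp only [Matrix.mulVec, dotProduct, Finset.mul_sum]
        exact Finset.sum_congr rfl fun j _ => by ring
      have h5 : β ^ (k + 1) * x i ≤ β * ((Q ^ k).mulVec x i) := by
        have := ih i
        have hβk : (0:ℝ) < β ^ k := by positivity
        calc β ^ (k + 1) * x i = β * (β ^ k * x i) := by ring
          _ ≤ β * ((Q ^ k).mulVec x i) := by
            exact mul_le_mul_of_nonneg_left (ih i) hβ.le
      exact h5.trans (h4 ▸ h3)
  set C : ℝ := ∑ j, x j with hC
  have hCpos : 0 < C := Finset.sum_pos' (fun j _ => hx j) ⟨i0, Finset.mem_univ i0, hx0⟩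
  have hrow : ∀ k : ℕ, (Q ^ k).mulVec x i0 ≤ ‖Qc ^ k‖ * C := by
    intro k
    have hxC : ∀ j, x j ≤ C := fun j =>
      Finset.single_le_sum (fun j' _ => hx j') (Finset.mem_univ j)
    have h1 : (Q ^ k).mulVec x i0 ≤ (∑ j, (Q ^ k) i0 j) * C := by
      rw [Matrix.mulVec, dotProduct, Finset.sum_mul]
      exact Finset.sum_le_sum fun j _ =>
        mul_le_mul_of_nonneg_left (hxC j) (pow_entry_nonneg Q hQ k i0 j)
    have h2 : (∑ j, (Q ^ k) i0 j) ≤ ‖Qc ^ k‖ := by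
      rw [hmapk k, Matrix.linfty_opNorm_def]
      have h3 : (∑ j, ‖((Q ^ k).map Complex.ofReal) i0 j‖₊)
          ≤ Finset.univ.sup fun i => ∑ j, ‖((Q ^ k).map Complex.ofReal) i j‖₊ :=
        Finset.le_sup (f := fun i => ∑ j, ‖((Q ^ k).map Complex.ofReal) i j‖₊)
          (Finset.mem_univ i0)
      calc (∑ j, (Q ^ k) i0 j)
          = ((∑ j, ‖((Q ^ k).map Complex.ofReal) i0 j‖₊ : ℝ≥0) : ℝ) := by
            rw [NNReal.coe_sum]
            refine Finset.sum_congr rfl fun j _ => ?_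
            rw [coe_nnnorm]
            simp only [Matrix.map_apply]
            rw [Complex.norm_real, Real.norm_eq_abs,
              abs_of_nonneg (pow_entry_nonneg Q hQ k i0 j)]
        _ ≤ _ := NNReal.coe_le_coe.mpr h3
    calc (Q ^ k).mulVec x i0 ≤ (∑ j, (Q ^ k) i0 j) * C := h1
      _ ≤ ‖Qc ^ k‖ * C := mul_le_mul_of_nonneg_right h2 hCpos.le
  -- contradiction
  have hev2 : ∀ᶠ k in atTop, (γ / β) ^ k < x i0 / C := by
    have h1 : Tendsto (fun k : ℕ => (γ / β) ^ k) atTop (nhds 0) :=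
      tendsto_pow_atTop_nhds_zero_of_lt_one (by positivity) (by rw [div_lt_one hβ]; exact hγβ)
    exact h1.eventually_lt_const (div_pos hx0 hCpos)
  obtain ⟨k, hk1, hk2⟩ := (hev'.and hev2).exists
  have h1 : β ^ k * x i0 ≤ γ ^ k * C := (hlow k i0).trans ((hrow k).trans
    (mul_le_mul_of_nonneg_right hk1 hCpos.le))
  have h2 : γ ^ k * C < x i0 * β ^ k := by
    have := hk2
    rw [div_pow, div_lt_div_iff₀ (by positivity) hCpos] at this
    exact this
  linarith

/-- Irreducibility gives a power of `1 + Q` with all entries positive. -/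
lemma exists_pow_pos (Q : Matrix (Fin n) (Fin n) ℝ) (hQ : ∀ i j, 0 ≤ Q i j)
    (hconn : ∀ p q : Fin n, Relation.ReflTransGen (fun i j => i = j ∨ 0 < Q i j) p q) :
    ∃ N : ℕ, ∀ p q : Fin n, 0 < ((1 + Q) ^ N) p q := by
  have h1Q : ∀ i j, 0 ≤ (1 + Q) i j := by
    intro i j
    simp only [Matrix.add_apply]
    by_cases h : i = j <;> [skip; skip] <;>
      · have := hQ i j
        simp only [Matrix.one_apply]
        split <;> linarith
  have hpow := pow_entry_nonneg (1 + Q) h1Q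
  have hmono : ∀ (L M : ℕ), L ≤ M → ∀ p q, ((1 + Q) ^ L) p q ≤ ((1 + Q) ^ M) p q := by
    intro L M hLM
    induction M, hLM using Nat.le_induction with
    | base => exact fun p q => le_refl _
    | succ M hLM ih =>
      intro p q
      refine (ih p q).trans ?_
      have : (1 + Q) ^ (M + 1) = (1 + Q) ^ M + (1 + Q) ^ M * Q := by
        rw [pow_succ, mul_add, mul_one]
      rw [this, Matrix.add_apply]
      have : 0 ≤ ((1 + Q) ^ M * Q) p q := by
        rw [Matrix.mul_apply]
        exact Finset.sum_nonneg fun l _ => mul_nonneg (hpow M p l) (hQ l q)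
      linarith
  have hstep : ∀ p q : Fin n, ∃ L : ℕ, 0 < ((1 + Q) ^ L) p q := by
    intro p q
    induction hconn p q with
    | refl => exact ⟨0, by simp [Matrix.one_apply]⟩
    | @tail b c hab hbc ih =>
      rcases hbc with rfl | hbc
      · exact ih
      · obtain ⟨L, hL⟩ := ih
        refine ⟨L + 1, ?_⟩
        have hterm : 0 < ((1 + Q) ^ L) p b * (1 + Q) b c := by
          apply mul_pos hL
          have : (1 + Q) b c = (1 : Matrix (Fin n) (Fin n) ℝ) b c + Q b c := rfl
          rw [this]
          have h1 : 0 ≤ (1 : Matrix (Fin n) (Fin n) ℝ) b c := by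
            simp only [Matrix.one_apply]; split <;> norm_num
          linarith
        have hsum : ((1 + Q) ^ L) p b * (1 + Q) b c ≤ ((1 + Q) ^ (L + 1)) p c := by
          rw [pow_succ, Matrix.mul_apply]
          exact Finset.single_le_sum
            (fun l _ => mul_nonneg (hpow L p l) (h1Q l c)) (Finset.mem_univ b)
        linarith
  choose f hf using hstep
  refine ⟨Finset.univ.sup (fun pq : Fin n × Fin n => f pq.1 pq.2), fun p q => ?_⟩
  have hle : f p q ≤ Finset.univ.sup (fun pq : Fin n × Fin n => f pq.1 pq.2) :=
    Finset.le_sup (f := fun pq : Fin n × Fin n => f pq.1 pq.2) (Finset.mem_univ (p, q))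
  exact lt_of_lt_of_le (hf p q) (hmono _ _ hle p q)

end Aux

/-- If `A` is a singular irreducible M-matrix and `v ≠ 0` with `A v ≥ 0` entrywise,
then `A v = 0`; in particular any nonzero image `A u` has both a positive and a
negative entry. -/
theorem stmt0 {n : ℕ} (A : Matrix (Fin n) (Fin n) ℝ)
    (hM : IsMMatrix A) (hirr : ∀ p q : Fin n, Access A p q) (hsing : A.det = 0) :
    (∀ v : Fin n → ℝ, v ≠ 0 → (∀ i, 0 ≤ A.mulVec v i) → A.mulVec v = 0) ∧
    (∀ u : Fin n → ℝ, u ≠ 0 → A.mulVec u ≠ 0 →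
      (∃ i, 0 < A.mulVec u i) ∧ (∃ j, A.mulVec u j < 0)) := by
  -- reduce to part 1 (without the nonzero hypothesis)
  suffices part1 : ∀ v : Fin n → ℝ, (∀ i, 0 ≤ A.mulVec v i) → A.mulVec v = 0 by
    refine ⟨fun v _ hv => part1 v hv, fun u _ hAu => ?_⟩
    constructor
    · by_contra h
      push_neg at h
      apply hAu
      have h2 := part1 (-u) (fun i => by
        rw [Matrix.mulVec_neg, Pi.neg_apply, neg_nonneg]; exact h i)
      rw [Matrix.mulVec_neg, neg_eq_zero] at h2
      exact h2
    · by_contra h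
      push_neg at h
      exact hAu (part1 u (fun i => h i))
  obtain ⟨α, P, hP, hαs, hA⟩ := hM
  rcases Nat.eq_zero_or_pos n with hn0 | hn
  · subst hn0
    intro v _
    funext i
    exact i.elim0
  haveI : Nonempty (Fin n) := Fin.pos_iff_nonempty.mp hn
  have hα0 : 0 ≤ α := le_trans (specRad_nonneg P) hαs
  -- a nonzero null vector of Aᵀ
  have hsingT : Aᵀ.det = 0 := by rw [Matrix.det_transpose]; exact hsing
  obtain ⟨w, hw0, hww⟩ := (Matrix.exists_mulVec_eq_zero_iff).mpr hsingT
  set u : Fin n → ℝ := fun i => |w i| with hu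
  have hu0 : ∀ i, 0 ≤ u i := fun i => abs_nonneg _
  have hune : ∃ i, 0 < u i := by
    obtain ⟨i, hi⟩ := Function.ne_iff.mp hw0
    exact ⟨i, abs_pos.mpr hi⟩
  -- Aᵀ w = 0 unpacked
  have hAT : ∀ i, Pᵀ.mulVec w i = α * w i := by
    intro i
    have h1 := congrFun hww i
    rw [hA, Matrix.transpose_sub, Matrix.transpose_smul, Matrix.transpose_one,
      Matrix.sub_mulVec, Matrix.smul_mulVec, Matrix.one_mulVec] at h1
    have h2 : α * w i - Pᵀ.mulVec w i = 0 := by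
      simpa [Pi.sub_apply, Pi.smul_apply, smul_eq_mul] using h1
    linarith
  -- subinvariance for u = |w|
  have hineq : ∀ i, α * u i ≤ Pᵀ.mulVec u i := by
    intro i
    have h1 : α * u i = |Pᵀ.mulVec w i| := by
      rw [hAT i, abs_mul, abs_of_nonneg hα0]
    rw [h1]
    calc |Pᵀ.mulVec w i| ≤ ∑ j, |Pᵀ i j * w j| := by
          rw [Matrix.mulVec, dotProduct]
          exact Finset.abs_sum_le_sum_abs _ _
      _ = Pᵀ.mulVec u i := by
          rw [Matrix.mulVec, dotProduct]
          refine Finset.sum_congr rfl fun j _ => ?_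
          rw [abs_mul, abs_of_nonneg (show (0:ℝ) ≤ Pᵀ i j from hP j i)]
  -- connectivity for Pᵀ
  have hPT : ∀ i j, 0 ≤ Pᵀ i j := fun i j => hP j i
  have hconnT : ∀ p q : Fin n,
      Relation.ReflTransGen (fun i j => i = j ∨ 0 < Pᵀ i j) p q := by
    intro p q
    have h1 : Relation.ReflTransGen (Function.swap fun i j => A i j ≠ 0) p q :=
      (Relation.reflTransGen_swap).mpr (hirr q p)
    refine Relation.ReflTransGen.mono ?_ _ _ h1
    intro i j hij
    rcases eq_or_ne i j with rfl | hne
    · exact Or.inl rfl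
    · right
      have h2 : A j i = α * (1 : Matrix (Fin n) (Fin n) ℝ) j i - P j i := by
        rw [hA]; simp [Matrix.sub_apply]
      rw [Matrix.one_apply_ne (Ne.symm hne)] at h2
      have h3 : P j i ≠ 0 := by
        intro h4
        exact hij (show A j i = 0 by rw [h2, h4]; ring)
      exact lt_of_le_of_ne (hP j i) (Ne.symm h3)
  obtain ⟨N, hN⟩ := exists_pow_pos Pᵀ hPT hconnT
  set B := (1 + Pᵀ) ^ N with hB
  have heq : ∀ i, Pᵀ.mulVec u i = α * u i := by
    by_contra hne
    push_neg at hne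
    obtain ⟨j1, hj1⟩ := hne
    have hyj1 : 0 < Pᵀ.mulVec u j1 - α * u j1 := by
      rcases lt_or_eq_of_le (hineq j1) with h | h
      · linarith
      · exact absurd h.symm hj1
    set u' := B.mulVec u with hu'
    have hu'pos : ∀ p, 0 < u' p := by
      intro p
      obtain ⟨q0, hq0⟩ := hune
      rw [hu', Matrix.mulVec, dotProduct]
      exact Finset.sum_pos' (fun q _ => mul_nonneg (hN p q).le (hu0 q))
        ⟨q0, Finset.mem_univ q0, mul_pos (hN p q0) hq0⟩
    have hstrict : ∀ p, α * u' p < Pᵀ.mulVec u' p := by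
      intro p
      have hcomm : Pᵀ * B = B * Pᵀ := by
        have h1 : Commute Pᵀ (1 + Pᵀ) := (Commute.one_right Pᵀ).add_right (Commute.refl Pᵀ)
        exact (h1.pow_right N).eq
      have h1 : Pᵀ.mulVec u' = B.mulVec (Pᵀ.mulVec u) := by
        rw [hu', Matrix.mulVec_mulVec, Matrix.mulVec_mulVec, hcomm]
      rw [h1]
      have h2 : B.mulVec (Pᵀ.mulVec u) p
          = α * u' p + ∑ q, B p q * (Pᵀ.mulVec u q - α * u q) := by
        rw [Matrix.mulVec, dotProduct]
        have h3 : ∀ q, B p q * Pᵀ.mulVec u q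
            = α * (B p q * u q) + B p q * (Pᵀ.mulVec u q - α * u q) := fun q => by ring
        rw [Finset.sum_congr rfl fun q _ => h3 q, Finset.sum_add_distrib, ← Finset.mul_sum]
        congr 1
      rw [h2]
      have h4 : 0 < ∑ q, B p q * (Pᵀ.mulVec u q - α * u q) :=
        Finset.sum_pos' (fun q _ => mul_nonneg (hN p q).le (sub_nonneg.mpr (hineq q)))
          ⟨j1, Finset.mem_univ j1, mul_pos (hN p j1) hyj1⟩
      linarith
    have hunivne : (Finset.univ : Finset (Fin n)).Nonempty := Finset.univ_nonempty
    set β : ℝ := Finset.univ.inf' hunivne (fun p => Pᵀ.mulVec u' p / u' p) with hβdef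
    have hβα : α < β := by
      rw [hβdef, Finset.lt_inf'_iff]
      intro p _
      rw [lt_div_iff₀ (hu'pos p)]
      calc α * u' p < Pᵀ.mulVec u' p := hstrict p
        _ = _ := by ring_nf
    have hβle : ∀ i, β * u' i ≤ Pᵀ.mulVec u' i := by
      intro i
      have h5 : β ≤ Pᵀ.mulVec u' i / u' i := Finset.inf'_le _ (Finset.mem_univ i)
      rw [le_div_iff₀ (hu'pos i)] at h5
      linarith
    have hβ0 : 0 < β := lt_of_le_of_lt hα0 hβα
    have h6 := le_specRad_of_mulVec_le hn Pᵀ hPT u' (fun i => (hu'pos i).le)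
      (Classical.arbitrary (Fin n)) (hu'pos _) β hβ0 hβle
    rw [specRad_transpose] at h6
    linarith
  -- strict positivity of u
  have hupos : ∀ i, 0 < u i := by
    by_contra hcon
    push_neg at hcon
    obtain ⟨i1, hi1'⟩ := hcon
    have hi1 : u i1 = 0 := le_antisymm hi1' (hu0 i1)
    have hprop : ∀ q, u q = 0 := by
      intro q
      induction hconnT i1 q with
      | refl => exact hi1
      | @tail b c hab hbc ih =>
        rcases hbc with rfl | hbc
        · exact ih
        · have h0 : Pᵀ.mulVec u b = 0 := by rw [heq b, ih, mul_zero]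
          rw [Matrix.mulVec, dotProduct] at h0
          have h1 := (Finset.sum_eq_zero_iff_of_nonneg
            (fun j _ => mul_nonneg (hPT b j) (hu0 j))).mp h0 c (Finset.mem_univ c)
          exact ((mul_eq_zero.mp h1).resolve_left (ne_of_gt hbc))
    obtain ⟨i, hi⟩ := hune
    rw [hprop i] at hi
    exact lt_irrefl 0 hi
  -- conclude part 1
  intro v hv
  have hvecMul : ∀ j, Matrix.vecMul u A j = 0 := by
    intro j
    have h1 : Matrix.vecMul u A j = α * u j - ∑ i, u i * P i j := by
      rw [hA, Matrix.vecMul, dotProduct]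
      have h2 : ∀ i, u i * (α • (1 : Matrix (Fin n) (Fin n) ℝ) - P) i j
          = α * ((1 : Matrix (Fin n) (Fin n) ℝ) i j * u i) - u i * P i j := fun i => by
        simp only [Matrix.sub_apply, Matrix.smul_apply, smul_eq_mul]; ring
      rw [Finset.sum_congr rfl fun i _ => h2 i, Finset.sum_sub_distrib, ← Finset.mul_sum]
      congr 2
      rw [Finset.sum_eq_single j]
      · rw [Matrix.one_apply_eq, one_mul]
      · intro i _ hij
        rw [Matrix.one_apply_ne hij, zero_mul]
      · intro h; exact absurd (Finset.mem_univ j) h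
    have h3 : Pᵀ.mulVec u j = ∑ i, u i * P i j := by
      rw [Matrix.mulVec, dotProduct]
      exact Finset.sum_congr rfl fun i _ => by rw [Matrix.transpose_apply]; ring
    rw [h1, ← h3, heq j]
    ring
  have hdot : u ⬝ᵥ A.mulVec v = 0 := by
    rw [Matrix.dotProduct_mulVec]
    have : Matrix.vecMul u A = 0 := funext hvecMul
    rw [this, zero_dotProduct]
  rw [dotProduct] at hdot
  have hterm := (Finset.sum_eq_zero_iff_of_nonneg
    (fun i _ => mul_nonneg (hupos i).le (hv i))).mp hdot
  funext i
  have h7 := hterm i (Finset.mem_univ i)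
  exact ((mul_eq_zero.mp h7).resolve_left (ne_of_gt (hupos i)))
end

section
/- Let A be an n×n M-matrix with factorization A = LU where L and U are both M-matrices. Let S be a singular class of A, i.e., S is a strongly connected component of the directed graph of A such that the principal submatrix A_{SS} is singular. Then either L_{SS} is singular or U_{SS} is singular. -/
open Matrix

/-! ### Auxiliary lemmas -/

namespace MAux

open Filter Topology

/-! #### Lemmas that are independent of any matrix norm -/

section NormFree

variable {m s : Type*} [Fintype m] [DecidableEq m] [Fintype s] [DecidableEq s]

theorem specdet (M : Matrix m m ℂ) (μ : ℂ) :
    μ ∈ spectrum ℂ M ↔ (μ • (1 : Matrix m m ℂ) - M).det = 0 := by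
  rw [spectrum.mem_iff, Algebra.algebraMap_eq_smul_one, Matrix.isUnit_iff_isUnit_det,
    isUnit_iff_ne_zero, not_not]

theorem pow_entry_nonneg (Q : Matrix m m ℝ) (hQ : ∀ i j, 0 ≤ Q i j) (k : ℕ) :
    ∀ i j, 0 ≤ (Q ^ k) i j := by
  induction k with
  | zero => intro i j; by_cases h : i = j <;> simp [pow_zero, Matrix.one_apply, h]
  | succ k ih =>
      intro i j
      rw [pow_succ, Matrix.mul_apply]
      exact Finset.sum_nonneg fun l _ => mul_nonneg (ih i l) (hQ l j)

theorem pow_submatrix_le (Q : Matrix m m ℝ) (hQ : ∀ i j, 0 ≤ Q i j) (v : s → m)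
    (hv : Function.Injective v) (k : ℕ) :
    ∀ i j, ((Q.submatrix v v) ^ k) i j ≤ (Q ^ k) (v i) (v j) := by
  induction k with
  | zero =>
      intro i j
      by_cases h : i = j
      · simp [pow_zero, Matrix.one_apply, h]
      · simp [pow_zero, Matrix.one_apply, h, hv.ne h]
  | succ k ih =>
      intro i j
      rw [pow_succ, pow_succ, Matrix.mul_apply, Matrix.mul_apply]
      have h1 : ∀ l : s, ((Q.submatrix v v) ^ k) i l * (Q.submatrix v v) l j
          ≤ (Q ^ k) (v i) (v l) * Q (v l) (v j) := by
        intro l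
        exact mul_le_mul (ih i l) le_rfl (hQ _ _)
          (pow_entry_nonneg Q hQ k _ _) |>.trans_eq rfl
      refine le_trans (Finset.sum_le_sum fun l _ => h1 l) ?_
      have h2 : ∑ l : s, (Q ^ k) (v i) (v l) * Q (v l) (v j)
          = ∑ w ∈ Finset.univ.image v, (Q ^ k) (v i) w * Q w (v j) := by
        rw [Finset.sum_image (fun a _ b _ h => hv h)]
      rw [h2]
      exact Finset.sum_le_sum_of_subset_of_nonneg (Finset.subset_univ _)
        (fun w _ _ => mul_nonneg (pow_entry_nonneg Q hQ k _ _) (hQ _ _))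

theorem map_smul_one_sub (Q : Matrix m m ℝ) (t : ℝ) :
    (t • (1 : Matrix m m ℝ) - Q).map Complex.ofReal
      = (t : ℂ) • (1 : Matrix m m ℂ) - Q.map Complex.ofReal := by
  ext i j
  by_cases h : i = j <;>
    simp [Matrix.map_apply, Matrix.sub_apply, Matrix.smul_apply, Matrix.one_apply, h]

theorem det_ne_zero_of_gt (Q : Matrix m m ℝ) (a t : ℝ)
    (hrad : spectralRadius ℂ (Q.map Complex.ofReal) ≤ ENNReal.ofReal a)
    (ha : 0 ≤ a) (hat : a < t) : (t • (1 : Matrix m m ℝ) - Q).det ≠ 0 := by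
  intro hdet
  have hC : (((t • (1 : Matrix m m ℝ) - Q).map Complex.ofReal)).det = 0 := by
    have h := RingHom.map_det Complex.ofRealHom (t • (1 : Matrix m m ℝ) - Q)
    rw [RingHom.mapMatrix_apply] at h
    rw [show ((t • (1 : Matrix m m ℝ) - Q).map Complex.ofReal)
        = (t • (1 : Matrix m m ℝ) - Q).map Complex.ofRealHom from rfl, ← h, hdet, map_zero]
  rw [map_smul_one_sub] at hC
  have hmem : (t : ℂ) ∈ spectrum ℂ (Q.map Complex.ofReal) := (specdet _ _).2 hC
  have h1 : (‖(t:ℂ)‖₊ : ENNReal) ≤ spectralRadius ℂ (Q.map Complex.ofReal) :=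
    le_iSup₂ (f := fun k (_ : k ∈ spectrum ℂ (Q.map Complex.ofReal)) => (‖k‖₊ : ENNReal)) _ hmem
  have h2 : (‖(t:ℂ)‖₊ : ENNReal) = ENNReal.ofReal t := by
    rw [← ENNReal.ofReal_coe_nnreal, coe_nnnorm]
    congr 1
    simp [Complex.norm_real, Real.norm_eq_abs, abs_of_nonneg (ha.trans hat.le)]
  rw [h2] at h1
  have := (ENNReal.ofReal_le_ofReal_iff ha).1 (h1.trans hrad)
  linarith

theorem inv_entry_nonneg_of_gt (Q : Matrix m m ℝ) (hQ : ∀ i j, 0 ≤ Q i j) (a t : ℝ)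
    (hrad : spectralRadius ℂ (Q.map Complex.ofReal) ≤ ENNReal.ofReal a)
    (ha : 0 ≤ a) (hat : a < t)
    (hdecay : ∀ i j, Tendsto (fun K : ℕ => (Q ^ K) i j / t ^ K) atTop (𝓝 0)) :
    ∀ i j, 0 ≤ ((t • (1 : Matrix m m ℝ) - Q)⁻¹) i j := by
  intro i j
  have ht0 : 0 < t := ha.trans_lt hat
  have hdet := det_ne_zero_of_gt Q a t hrad ha hat
  set B : Matrix m m ℝ := t • (1 : Matrix m m ℝ) - Q with hB
  have hBinv : B⁻¹ * B = 1 := Matrix.nonsing_inv_mul B (isUnit_iff_ne_zero.2 hdet)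
  have key : ∀ K : ℕ, B * (∑ k ∈ Finset.range K, (t ^ (k+1))⁻¹ • Q ^ k)
      = 1 - (t ^ K)⁻¹ • Q ^ K := by
    intro K
    rw [Matrix.mul_sum]
    have hterm : ∀ k : ℕ, B * ((t ^ (k+1))⁻¹ • Q ^ k)
        = (t ^ k)⁻¹ • Q ^ k - (t ^ (k+1))⁻¹ • Q ^ (k+1) := by
      intro k
      rw [Matrix.mul_smul, hB, Matrix.sub_mul, Matrix.smul_mul, one_mul, ← pow_succ',
        smul_sub, smul_smul]
      congr 2
      rw [pow_succ]
      field_simp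
    calc ∑ k ∈ Finset.range K, B * ((t ^ (k+1))⁻¹ • Q ^ k)
        = ∑ k ∈ Finset.range K, ((t ^ k)⁻¹ • Q ^ k - (t ^ (k+1))⁻¹ • Q ^ (k+1)) := by
          exact Finset.sum_congr rfl fun k _ => hterm k
      _ = (t ^ 0)⁻¹ • Q ^ 0 - (t ^ K)⁻¹ • Q ^ K :=
          Finset.sum_range_sub' (fun k => (t ^ k)⁻¹ • Q ^ k) K
      _ = 1 - (t ^ K)⁻¹ • Q ^ K := by simp
  have key2 : ∀ K : ℕ, (∑ k ∈ Finset.range K, (t ^ (k+1))⁻¹ • Q ^ k)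
      = B⁻¹ - (t ^ K)⁻¹ • (B⁻¹ * Q ^ K) := by
    intro K
    have := congrArg (fun X => B⁻¹ * X) (key K)
    rw [← Matrix.mul_assoc, hBinv, one_mul] at this
    rw [this, Matrix.mul_sub, Matrix.mul_one, Matrix.mul_smul]
  have hF : ∀ K : ℕ, (0:ℝ) ≤ (∑ k ∈ Finset.range K, (t ^ (k+1))⁻¹ • Q ^ k) i j := by
    intro K
    rw [Matrix.sum_apply]
    exact Finset.sum_nonneg fun k _ => by
      rw [Matrix.smul_apply, smul_eq_mul]
      exact mul_nonneg (by positivity) (pow_entry_nonneg Q hQ k i j)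
  have hFlim : Tendsto (fun K : ℕ => (∑ k ∈ Finset.range K, (t ^ (k+1))⁻¹ • Q ^ k) i j)
      atTop (𝓝 (B⁻¹ i j)) := by
    have hrw : ∀ K : ℕ, (∑ k ∈ Finset.range K, (t ^ (k+1))⁻¹ • Q ^ k) i j
        = B⁻¹ i j - ∑ l : m, B⁻¹ i l * ((Q ^ K) l j / t ^ K) := by
      intro K
      rw [key2 K, Matrix.sub_apply, Matrix.smul_apply, Matrix.mul_apply, smul_eq_mul,
        Finset.mul_sum]
      congr 1
      refine Finset.sum_congr rfl fun l _ => by ring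
    simp_rw [hrw]
    have h0 : Tendsto (fun K : ℕ => ∑ l : m, B⁻¹ i l * ((Q ^ K) l j / t ^ K)) atTop
        (𝓝 (∑ l : m, B⁻¹ i l * 0)) :=
      tendsto_finset_sum _ fun l _ => (hdecay l j).const_mul _
    simpa using tendsto_const_nhds.sub h0
  exact ge_of_tendsto' hFlim hF

theorem det_ne_zero_of_Z_pos (B : Matrix m m ℝ) (hoff : ∀ i j, i ≠ j → B i j ≤ 0)
    (x : m → ℝ) (hx : ∀ i, 0 < x i) (hBx : ∀ i, 0 < (B *ᵥ x) i) : B.det ≠ 0 := by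
  have hC : (B * Matrix.diagonal x).det ≠ 0 := by
    refine det_ne_zero_of_sum_row_lt_diag fun k => ?_
    have hCkj : ∀ j, (B * Matrix.diagonal x) k j = B k j * x j := fun j =>
      Matrix.mul_diagonal (d := x) (M := B) k j
    have hmv : (B *ᵥ x) k = ∑ j : m, B k j * x j := by
      simp [Matrix.mulVec, dotProduct]
    have hsplit : ∑ j : m, B k j * x j
        = B k k * x k + ∑ j ∈ Finset.univ.erase k, B k j * x j := by
      rw [← Finset.add_sum_erase _ _ (Finset.mem_univ k)]
    have hle : ∑ j ∈ Finset.univ.erase k, ‖(B * Matrix.diagonal x) k j‖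
        = -∑ j ∈ Finset.univ.erase k, B k j * x j := by
      rw [← Finset.sum_neg_distrib]
      refine Finset.sum_congr rfl fun j hj => ?_
      have hjk : j ≠ k := Finset.ne_of_mem_erase hj
      rw [hCkj j, Real.norm_eq_abs, abs_of_nonpos
        (mul_nonpos_of_nonpos_of_nonneg (hoff k j (Ne.symm hjk)) (hx j).le)]
    rw [hle]
    have h1 : -∑ j ∈ Finset.univ.erase k, B k j * x j = B k k * x k - (B *ᵥ x) k := by
      rw [hmv, hsplit]; ring
    rw [h1, hCkj k]
    have h2 : B k k * x k - (B *ᵥ x) k < B k k * x k := by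
      have := hBx k; linarith
    refine lt_of_lt_of_le h2 (le_abs_self _)
  intro h
  rw [Matrix.det_mul, Matrix.det_diagonal, h, zero_mul] at hC
  exact hC rfl

theorem pos_mulVec_inv (B : Matrix m m ℝ) (hdet : B.det ≠ 0) (hinv : ∀ i j, 0 ≤ B⁻¹ i j)
    (z : m → ℝ) (hz : ∀ i, 0 < z i) :
    (∀ i, 0 < (B⁻¹ *ᵥ z) i) ∧ B *ᵥ (B⁻¹ *ᵥ z) = z := by
  constructor
  · intro i
    have hnn : 0 ≤ (B⁻¹ *ᵥ z) i := by
      simp only [Matrix.mulVec, dotProduct]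
      exact Finset.sum_nonneg fun j _ => mul_nonneg (hinv i j) (hz j).le
    rcases eq_or_lt_of_le hnn with h0 | h
    · exfalso
      have hall : ∀ j ∈ Finset.univ, B⁻¹ i j * z j = 0 := by
        refine (Finset.sum_eq_zero_iff_of_nonneg
          (fun j _ => mul_nonneg (hinv i j) (hz j).le)).1 ?_
        simp only [Matrix.mulVec, dotProduct] at h0
        exact h0.symm
      have hrow : ∀ j, B⁻¹ i j = 0 := by
        intro j
        have := hall j (Finset.mem_univ j)
        rcases mul_eq_zero.1 this with h | h
        · exact h
        · exact absurd h (hz j).ne'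
      have : B⁻¹.det = 0 := Matrix.det_eq_zero_of_row_eq_zero i hrow
      rw [Matrix.det_nonsing_inv] at this
      rw [Ring.inverse_eq_inv] at this
      exact hdet (inv_eq_zero.1 this)
    · exact h
  · rw [Matrix.mulVec_mulVec, Matrix.mul_nonsing_inv B (isUnit_iff_ne_zero.2 hdet),
      Matrix.one_mulVec]

theorem specRad_bddAbove (P : Matrix m m ℝ) :
    BddAbove {r : ℝ | ∃ μ ∈ spectrum ℂ (P.map (Complex.ofReal)), r = ‖μ‖} := by
  have : {r : ℝ | ∃ μ ∈ spectrum ℂ (P.map (Complex.ofReal)), r = ‖μ‖}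
      = (fun μ => ‖μ‖) '' (spectrum ℂ (P.map (Complex.ofReal))) := by
    ext r; simp [eq_comm]
  rw [this]
  exact ((Matrix.finite_spectrum _).image _).bddAbove

theorem abs_le_specRad (P : Matrix m m ℝ) (μ : ℂ)
    (h : μ ∈ spectrum ℂ (P.map (Complex.ofReal))) : ‖μ‖ ≤ specRad P :=
  le_csSup (specRad_bddAbove P) ⟨μ, h, rfl⟩

theorem spectralRadius_le_ofReal (P : Matrix m m ℝ) (a : ℝ) (hP : specRad P ≤ a) :
    spectralRadius ℂ (P.map Complex.ofReal) ≤ ENNReal.ofReal a := by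
  refine iSup₂_le fun μ hμ => ?_
  rw [← ENNReal.ofReal_coe_nnreal, coe_nnnorm]
  refine ENNReal.ofReal_le_ofReal ?_
  exact (abs_le_specRad P μ hμ).trans hP

end NormFree

/-! #### Lemmas using the `L∞`-operator norm on matrices -/

section NormBits

attribute [local instance] Matrix.linftyOpNormedAddCommGroup Matrix.linftyOpNormedRing
  Matrix.linftyOpNormedAlgebra Matrix.linftyOpNormedSpace

variable {m s : Type*} [Fintype m] [DecidableEq m] [Fintype s] [DecidableEq s]

theorem matrix_spectrum_nonempty [Nonempty m] (M : Matrix m m ℂ) :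
    (spectrum ℂ M).Nonempty := by
  have complete : CompleteSpace (Matrix m m ℂ) := FiniteDimensional.complete ℂ _
  have : Nontrivial (Matrix m m ℂ) := inferInstance
  exact spectrum.nonempty M

theorem specRad_nonneg [Nonempty m] (P : Matrix m m ℝ) : 0 ≤ specRad P := by
  obtain ⟨μ, hμ⟩ := matrix_spectrum_nonempty (P.map Complex.ofReal)
  exact le_trans (norm_nonneg μ) (abs_le_specRad P μ hμ)

theorem entry_abs_le_norm (X : Matrix m m ℝ) (i j : m) : |X i j| ≤ ‖X‖ := by
  have h : ‖X i j‖₊ ≤ ‖X‖₊ := by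
    rw [Matrix.linfty_opNNNorm_def]
    exact le_trans (Finset.single_le_sum (f := fun j => ‖X i j‖₊) (fun _ _ => zero_le)
      (Finset.mem_univ j)) (Finset.le_sup (f := fun i => ∑ j : m, ‖X i j‖₊) (Finset.mem_univ i))
  rw [← Real.norm_eq_abs]
  exact_mod_cast h

theorem matMapNNNorm (X : Matrix m s ℝ) : ‖X.map Complex.ofReal‖₊ = ‖X‖₊ := by
  rw [Matrix.linfty_opNNNorm_def, Matrix.linfty_opNNNorm_def]
  congr 1; ext i; congr 1; ext j; simp [Matrix.map_apply]

theorem nnnorm_le_of_dom (X : Matrix s s ℝ) (Y : Matrix m m ℝ) (v : s → m)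
    (hv : Function.Injective v) (hY : ∀ i j, 0 ≤ Y i j)
    (hXY : ∀ i j, |X i j| ≤ Y (v i) (v j)) : ‖X‖₊ ≤ ‖Y‖₊ := by
  rw [Matrix.linfty_opNNNorm_def, Matrix.linfty_opNNNorm_def]
  refine Finset.sup_le fun i _ => ?_
  have h1 : ∑ j : s, ‖X i j‖₊ ≤ ∑ j : s, ‖Y (v i) (v j)‖₊ := by
    refine Finset.sum_le_sum fun j _ => ?_
    have := hXY i j
    rw [← NNReal.coe_le_coe]
    simpa [Real.norm_eq_abs, abs_of_nonneg (hY (v i) (v j))] using this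
  refine le_trans h1 ?_
  have h2 : ∑ j : s, ‖Y (v i) (v j)‖₊ = ∑ w ∈ Finset.univ.image v, ‖Y (v i) w‖₊ := by
    rw [Finset.sum_image (fun a _ b _ h => hv h)]
  rw [h2]
  refine le_trans (Finset.sum_le_sum_of_subset_of_nonneg (Finset.subset_univ _)
    (fun w _ _ => zero_le)) ?_
  exact Finset.le_sup (f := fun i => ∑ j : m, ‖Y i j‖₊) (Finset.mem_univ (v i))

theorem spectralRadius_submatrix_le (Q : Matrix m m ℝ) (hQ : ∀ i j, 0 ≤ Q i j) (v : s → m)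
    (hv : Function.Injective v) :
    spectralRadius ℂ ((Q.submatrix v v).map Complex.ofReal)
      ≤ spectralRadius ℂ (Q.map Complex.ofReal) := by
  have complete : CompleteSpace (Matrix m m ℂ) := FiniteDimensional.complete ℂ _
  have complete' : CompleteSpace (Matrix s s ℂ) := FiniteDimensional.complete ℂ _
  have g1 := spectrum.pow_nnnorm_pow_one_div_tendsto_nhds_spectralRadius
    ((Q.submatrix v v).map Complex.ofReal)
  have g2 := spectrum.pow_nnnorm_pow_one_div_tendsto_nhds_spectralRadius
    (Q.map Complex.ofReal)
  refine le_of_tendsto_of_tendsto' g1 g2 fun k => ?_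
  refine ENNReal.rpow_le_rpow ?_ (by positivity)
  have e1 : ((Q.submatrix v v).map Complex.ofReal) ^ k
      = ((Q.submatrix v v) ^ k).map Complex.ofReal := by
    exact (map_pow (Complex.ofRealHom.mapMatrix (m := s)) (Q.submatrix v v) k).symm
  have e2 : (Q.map Complex.ofReal) ^ k = (Q ^ k).map Complex.ofReal := by
    exact (map_pow (Complex.ofRealHom.mapMatrix (m := m)) Q k).symm
  rw [e1, e2, matMapNNNorm, matMapNNNorm]
  have hsub : ∀ i j, 0 ≤ (Q.submatrix v v) i j := fun i j => hQ _ _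
  refine ENNReal.coe_le_coe.2 (nnnorm_le_of_dom _ _ v hv (pow_entry_nonneg Q hQ k) ?_)
  intro i j
  rw [abs_of_nonneg (pow_entry_nonneg (Q.submatrix v v) hsub k i j)]
  exact pow_submatrix_le Q hQ v hv k i j

theorem entry_decay (Q : Matrix m m ℝ) (t : ℝ)
    (hrad : spectralRadius ℂ (Q.map Complex.ofReal) < ENNReal.ofReal t) (i j : m) :
    Tendsto (fun K : ℕ => (Q ^ K) i j / t ^ K) atTop (𝓝 0) := by
  have complete : CompleteSpace (Matrix m m ℂ) := FiniteDimensional.complete ℂ _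
  obtain ⟨c, hc1, hc2⟩ := exists_between hrad
  have hcne : c ≠ ⊤ := hc2.trans_le le_top |>.ne
  set cr : ℝ := c.toReal with hcr
  have hcr0 : 0 ≤ cr := ENNReal.toReal_nonneg
  have ht0 : 0 < t := by
    by_contra h
    push_neg at h
    rw [ENNReal.ofReal_of_nonpos h] at hc2
    exact (not_lt_of_ge (zero_le : 0 ≤ c)) hc2
  have hcrt : cr < t := by
    have := (ENNReal.toReal_lt_toReal hcne (by simp)).2 hc2
    simpa [ENNReal.toReal_ofReal ht0.le] using this
  have gel := spectrum.pow_nnnorm_pow_one_div_tendsto_nhds_spectralRadius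
    (Q.map Complex.ofReal)
  have hev : ∀ᶠ K : ℕ in atTop, (‖(Q.map Complex.ofReal) ^ K‖₊ : ENNReal) ^ (1 / (K:ℝ)) < c :=
    gel.eventually_lt_const hc1
  have hev2 : ∀ᶠ K : ℕ in atTop, ‖Q ^ K‖ ≤ cr ^ K := by
    filter_upwards [hev, eventually_ge_atTop 1] with K hK hK1
    have hKne : (K : ℝ) ≠ 0 := by positivity
    have h1 : (‖(Q.map Complex.ofReal) ^ K‖₊ : ENNReal) ≤ c ^ K := by
      have := ENNReal.rpow_le_rpow hK.le (by positivity : (0:ℝ) ≤ (K:ℝ))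
      rw [← ENNReal.rpow_mul, one_div, inv_mul_cancel₀ hKne, ENNReal.rpow_one,
        ENNReal.rpow_natCast] at this
      exact this
    have e2 : (Q.map Complex.ofReal) ^ K = (Q ^ K).map Complex.ofReal := by
      exact (map_pow (Complex.ofRealHom.mapMatrix (m := m)) Q K).symm
    rw [e2, matMapNNNorm] at h1
    have h2 : (‖Q ^ K‖₊ : ENNReal) ≤ ENNReal.ofReal (cr ^ K) := by
      calc (‖Q ^ K‖₊ : ENNReal) ≤ c ^ K := h1
        _ = (ENNReal.ofReal cr) ^ K := by rw [ENNReal.ofReal_toReal hcne]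
        _ = ENNReal.ofReal (cr ^ K) := by rw [ENNReal.ofReal_pow hcr0]
    have := ENNReal.toReal_mono (by simp [ENNReal.ofReal_ne_top]) h2
    rwa [ENNReal.coe_toReal, ENNReal.toReal_ofReal (by positivity), coe_nnnorm] at this
  refine squeeze_zero_norm' (a := fun K => (cr/t) ^ K * t ^ K / t ^ K) ?_ ?_
  · filter_upwards [hev2] with K hK
    rw [Real.norm_eq_abs, abs_div, abs_of_nonneg (by positivity : (0:ℝ) ≤ t ^ K)]
    refine div_le_div_of_nonneg_right ?_ (by positivity)
    calc |(Q ^ K) i j| ≤ ‖Q ^ K‖ := entry_abs_le_norm _ i j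
      _ ≤ cr ^ K := hK
      _ = (cr / t) ^ K * t ^ K := by
          rw [div_pow, div_mul_cancel₀]
          positivity
  · have : ∀ K : ℕ, (cr / t) ^ K * t ^ K / t ^ K = (cr / t) ^ K := by
      intro K; rw [mul_div_cancel_right₀]; positivity
    simp_rw [this]
    exact tendsto_pow_atTop_nhds_zero_of_lt_one (by positivity) (by
      rw [div_lt_one ht0]; exact hcrt)

end NormBits

/-! #### Inverse-positivity of nonsingular M-matrices -/

section InvPos

variable {m : Type*} [Fintype m] [DecidableEq m]

theorem inv_entry_nonneg (Q : Matrix m m ℝ) (hQ : ∀ i j, 0 ≤ Q i j) (a : ℝ)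
    (hrad : spectralRadius ℂ (Q.map Complex.ofReal) ≤ ENNReal.ofReal a)
    (ha : 0 ≤ a) (hdet : (a • (1 : Matrix m m ℝ) - Q).det ≠ 0) :
    ∀ i j, 0 ≤ ((a • (1 : Matrix m m ℝ) - Q)⁻¹) i j := by
  intro i j
  set φ : ℝ → ℝ := fun t => ((t • (1 : Matrix m m ℝ) - Q).det)⁻¹
    * (t • (1 : Matrix m m ℝ) - Q).adjugate i j with hφdef
  have hφ : ∀ t : ℝ, ((t • (1 : Matrix m m ℝ) - Q)⁻¹) i j = φ t := by
    intro t
    rw [Matrix.inv_def, Ring.inverse_eq_inv, Matrix.smul_apply, smul_eq_mul, hφdef]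
  have hMcont : Continuous fun t : ℝ => t • (1 : Matrix m m ℝ) - Q :=
    (continuous_id.smul continuous_const).sub continuous_const
  have hφcont : ContinuousAt φ a := by
    refine ContinuousAt.mul ?_ ?_
    · exact (hMcont.matrix_det.continuousAt).inv₀ hdet
    · exact ((hMcont.matrix_adjugate).matrix_elem i j).continuousAt
  have hseq : Tendsto (fun k : ℕ => a + ((k : ℝ) + 1)⁻¹) atTop (𝓝 a) := by
    have h := tendsto_one_div_add_atTop_nhds_zero_nat (𝕜 := ℝ)
    simp_rw [one_div] at h
    simpa using tendsto_const_nhds.add h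
  have hcomp : Tendsto (fun k : ℕ => φ (a + ((k : ℝ) + 1)⁻¹)) atTop (𝓝 (φ a)) :=
    hφcont.tendsto.comp hseq
  have hpos : ∀ k : ℕ, 0 ≤ φ (a + ((k : ℝ) + 1)⁻¹) := by
    intro k
    have hat : a < a + ((k : ℝ) + 1)⁻¹ := by
      have : (0:ℝ) < ((k : ℝ) + 1)⁻¹ := by positivity
      linarith
    have hradlt : spectralRadius ℂ (Q.map Complex.ofReal)
        < ENNReal.ofReal (a + ((k : ℝ) + 1)⁻¹) := by
      refine lt_of_le_of_lt hrad ?_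
      rw [ENNReal.ofReal_lt_ofReal_iff (by linarith)]
      exact hat
    have := inv_entry_nonneg_of_gt Q hQ a _ hrad ha hat
      (fun i j => entry_decay Q _ hradlt i j) i j
    rwa [hφ] at this
  rw [hφ]
  exact ge_of_tendsto' hcomp hpos

end InvPos

end MAux

/-- If `A = L * U` with `A, L, U` M-matrices and `S` is a singular class of `A`,
then `L_{SS}` or `U_{SS}` is singular. -/
theorem stmt1 {n : ℕ} (A L U : Matrix (Fin n) (Fin n) ℝ)
    (hA : IsMMatrix A) (hL : IsMMatrix L) (hU : IsMMatrix U) (hfact : A = L * U)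
    (S : Finset (Fin n)) (hS : IsSingClass A S) :
    (L.submatrix (fun i : S => (i : Fin n)) (fun j : S => (j : Fin n))).det = 0 ∨
    (U.submatrix (fun i : S => (i : Fin n)) (fun j : S => (j : Fin n))).det = 0 := by
  classical
  by_cases hdL : (L.submatrix (fun i : S => (i : Fin n)) (fun j : S => (j : Fin n))).det = 0
  · exact Or.inl hdL
  by_cases hdU : (U.submatrix (fun i : S => (i : Fin n)) (fun j : S => (j : Fin n))).det = 0
  · exact Or.inr hdU
  exfalso
  set v : S → Fin n := fun i => (i : Fin n) with hv
  have hvinj : Function.Injective v := Subtype.val_injective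
  -- `S` is nonempty
  have hSne : Nonempty S := by
    by_contra h
    rw [not_nonempty_iff] at h
    have h2 := hS.2
    rw [Matrix.det_isEmpty] at h2
    exact one_ne_zero h2
  have hn : Nonempty (Fin n) := ⟨v (Classical.arbitrary S)⟩
  obtain ⟨aA, PA, hPA, hsA, hAeq⟩ := hA
  obtain ⟨aL, PL, hPL, hsL, hLeq⟩ := hL
  obtain ⟨aU, PU, hPU, hsU, hUeq⟩ := hU
  have haL : 0 ≤ aL := le_trans (MAux.specRad_nonneg PL) hsL
  have haU : 0 ≤ aU := le_trans (MAux.specRad_nonneg PU) hsU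
  -- submatrix identities
  have hone : (1 : Matrix (Fin n) (Fin n) ℝ).submatrix v v = (1 : Matrix S S ℝ) := by
    ext i j
    by_cases h : i = j
    · subst h; simp [Matrix.submatrix_apply, Matrix.one_apply]
    · rw [Matrix.submatrix_apply, Matrix.one_apply_ne (fun hh => h (hvinj hh)),
        Matrix.one_apply_ne h]
  have hLs : L.submatrix v v = aL • (1 : Matrix S S ℝ) - PL.submatrix v v := by
    rw [hLeq]
    ext i j
    rw [Matrix.submatrix_apply, Matrix.sub_apply, Matrix.sub_apply, Matrix.smul_apply,
      Matrix.smul_apply, ← hone, Matrix.submatrix_apply]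
    rfl
  have hUs : U.submatrix v v = aU • (1 : Matrix S S ℝ) - PU.submatrix v v := by
    rw [hUeq]
    ext i j
    rw [Matrix.submatrix_apply, Matrix.sub_apply, Matrix.sub_apply, Matrix.smul_apply,
      Matrix.smul_apply, ← hone, Matrix.submatrix_apply]
    rfl
  -- spectral radius bounds for the submatrices
  have hradL : spectralRadius ℂ ((PL.submatrix v v).map Complex.ofReal)
      ≤ ENNReal.ofReal aL :=
    le_trans (MAux.spectralRadius_submatrix_le PL hPL v hvinj)
      (MAux.spectralRadius_le_ofReal PL aL hsL)
  have hradU : spectralRadius ℂ ((PU.submatrix v v).map Complex.ofReal)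
      ≤ ENNReal.ofReal aU :=
    le_trans (MAux.spectralRadius_submatrix_le PU hPU v hvinj)
      (MAux.spectralRadius_le_ofReal PU aU hsU)
  -- inverse positivity
  have hPLs : ∀ i j, 0 ≤ (PL.submatrix v v) i j := fun i j => hPL _ _
  have hPUs : ∀ i j, 0 ≤ (PU.submatrix v v) i j := fun i j => hPU _ _
  have hdLs : (aL • (1 : Matrix S S ℝ) - PL.submatrix v v).det ≠ 0 := by
    rw [← hLs]; exact hdL
  have hdUs : (aU • (1 : Matrix S S ℝ) - PU.submatrix v v).det ≠ 0 := by
    rw [← hUs]; exact hdU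
  have hinvLs : ∀ i j, 0 ≤ ((L.submatrix v v)⁻¹) i j := by
    rw [hLs]; exact MAux.inv_entry_nonneg _ hPLs aL hradL haL hdLs
  have hinvUs : ∀ i j, 0 ≤ ((U.submatrix v v)⁻¹) i j := by
    rw [hUs]; exact MAux.inv_entry_nonneg _ hPUs aU hradU haU hdUs
  -- positive vectors
  obtain ⟨hzpos, hLz⟩ := MAux.pos_mulVec_inv (L.submatrix v v) hdL hinvLs
    (fun _ => (1:ℝ)) (fun _ => one_pos)
  set z : S → ℝ := (L.submatrix v v)⁻¹ *ᵥ (fun _ => (1:ℝ)) with hz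
  obtain ⟨hxpos, hUx⟩ := MAux.pos_mulVec_inv (U.submatrix v v) hdU hinvUs z hzpos
  set x : S → ℝ := (U.submatrix v v)⁻¹ *ᵥ z with hx
  -- the key positivity of `A_SS *ᵥ x`
  have hoffL : ∀ (i : Fin n) (w : Fin n), i ≠ w → L i w ≤ 0 := by
    intro i w hiw
    rw [hLeq, Matrix.sub_apply, Matrix.smul_apply, Matrix.one_apply_ne hiw]
    simpa using hPL i w
  have hoffU : ∀ (i : Fin n) (w : Fin n), i ≠ w → U i w ≤ 0 := by
    intro i w hiw
    rw [hUeq, Matrix.sub_apply, Matrix.smul_apply, Matrix.one_apply_ne hiw]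
    simpa using hPU i w
  have hmain : ∀ i : S, 0 < ((A.submatrix v v) *ᵥ x) i := by
    intro i
    have hAentry : ∀ j : S, A (v i) (v j)
        = (∑ w : S, L (v i) (v w) * U (v w) (v j)) + ∑ w ∈ Sᶜ, L (v i) w * U w (v j) := by
      intro j
      rw [hfact, Matrix.mul_apply]
      rw [← Finset.sum_add_sum_compl S (fun w => L (v i) w * U w (v j))]
      congr 1
      exact (Finset.sum_coe_sort S (fun w => L (v i) w * U w (v j))).symm
    have h1 : ((A.submatrix v v) *ᵥ x) i
        = ((L.submatrix v v * U.submatrix v v) *ᵥ x) i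
          + ∑ j : S, (∑ w ∈ Sᶜ, L (v i) w * U w (v j)) * x j := by
      simp only [Matrix.mulVec, dotProduct, Matrix.submatrix_apply, Matrix.mul_apply]
      rw [← Finset.sum_add_distrib]
      refine Finset.sum_congr rfl fun j _ => ?_
      rw [hAentry j, add_mul]
    have h2 : ((L.submatrix v v * U.submatrix v v) *ᵥ x) i = 1 := by
      rw [← Matrix.mulVec_mulVec, hUx, hLz]
    have h3 : 0 ≤ ∑ j : S, (∑ w ∈ Sᶜ, L (v i) w * U w (v j)) * x j := by
      refine Finset.sum_nonneg fun j _ => ?_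
      refine mul_nonneg (Finset.sum_nonneg fun w hw => ?_) (hxpos j).le
      have hwS : w ∉ S := Finset.mem_compl.1 hw
      have hiw : v i ≠ w := fun h => hwS (by rw [← h]; exact i.2)
      have hwj : w ≠ v j := fun h => hwS (by rw [h]; exact j.2)
      simpa using mul_nonneg (neg_nonneg.2 (hoffL _ _ hiw)) (neg_nonneg.2 (hoffU _ _ hwj))
    rw [h1, h2]
    linarith
  -- off-diagonal entries of `A_SS` are nonpositive
  have hoffAs : ∀ i j : S, i ≠ j → (A.submatrix v v) i j ≤ 0 := by
    intro i j hij
    have hvij : v i ≠ v j := fun h => hij (hvinj h)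
    rw [Matrix.submatrix_apply, hAeq, Matrix.sub_apply, Matrix.smul_apply,
      Matrix.one_apply_ne hvij]
    simpa using hPA (v i) (v j)
  have hdet := MAux.det_ne_zero_of_Z_pos (A.submatrix v v) hoffAs x hxpos hmain
  exact hdet hS.2
end

section
/- Let A be an n×n M-matrix with A = LU where L and U are M-matrices. Let S be a singular class of L. Then for any p ∈ S and any q ∈ {1,…,n}, if p has access to q in the directed graph of A (i.e., there is a directed path from p to q in G(A)), then p has access to q in the directed graph of L. -/
open Matrix

section Aux

variable {n : ℕ} {L P : Matrix (Fin n) (Fin n) ℝ}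

lemma aux_pow_nonneg (hP : ∀ i j, 0 ≤ P i j) (N : ℕ) (i j : Fin n) :
    0 ≤ ((1 + P) ^ N) i j := by
  induction N generalizing i j with
  | zero =>
    simp only [pow_zero]
    rcases eq_or_ne i j with rfl | h
    · simp
    · simp [Matrix.one_apply_ne h]
  | succ m ih =>
    rw [pow_succ, Matrix.mul_apply]
    refine Finset.sum_nonneg fun k _ => mul_nonneg (ih i k) ?_
    rcases eq_or_ne k j with rfl | h
    · simp only [Matrix.add_apply, Matrix.one_apply_eq]
      linarith [hP k k]
    · simp only [Matrix.add_apply, Matrix.one_apply_ne h, zero_add]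
      exact hP k j

lemma aux_B_pos_of_edge (hP : ∀ i j, 0 ≤ P i j)
    (hoff : ∀ i j, i ≠ j → L i j = -(P i j)) {i j : Fin n}
    (h : L i j ≠ 0 ∨ i = j) : 0 < (1 + P) i j := by
  rcases eq_or_ne i j with rfl | hne
  · simp only [Matrix.add_apply, Matrix.one_apply_eq]
    linarith [hP i i]
  · rcases h with h | h
    · simp only [Matrix.add_apply, Matrix.one_apply_ne hne, zero_add]
      rcases lt_or_eq_of_le (hP i j) with h' | h'
      · exact h'
      · exact absurd (by rw [hoff i j hne, ← h', neg_zero]) h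
    · exact absurd h hne

lemma aux_pow_succ_pos (hP : ∀ i j, 0 ≤ P i j) {m : ℕ} {i j k : Fin n}
    (h1 : 0 < ((1 + P) ^ m) i j) (h2 : 0 < (1 + P) j k) :
    0 < ((1 + P) ^ (m + 1)) i k := by
  rw [pow_succ, Matrix.mul_apply]
  calc (0:ℝ) < ((1 + P) ^ m) i j * (1 + P) j k := mul_pos h1 h2
    _ ≤ ∑ x, ((1 + P) ^ m) i x * (1 + P) x k := by
        refine Finset.single_le_sum (f := fun x => ((1 + P) ^ m) i x * (1 + P) x k)
          (fun x _ => mul_nonneg (aux_pow_nonneg hP m i x) ?_) (Finset.mem_univ j)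
        have := aux_pow_nonneg hP 1 x k
        simpa using this

lemma aux_pow_mono (hP : ∀ i j, 0 ≤ P i j)
    (hoff : ∀ i j, i ≠ j → L i j = -(P i j)) {m m' : ℕ} (hmm : m ≤ m') {i j : Fin n}
    (h : 0 < ((1 + P) ^ m) i j) : 0 < ((1 + P) ^ m') i j := by
  induction m', hmm using Nat.le_induction with
  | base => exact h
  | succ k hk ih =>
    exact aux_pow_succ_pos hP ih (aux_B_pos_of_edge hP hoff (Or.inr rfl))

lemma aux_access_pow (hP : ∀ i j, 0 ≤ P i j)
    (hoff : ∀ i j, i ≠ j → L i j = -(P i j)) {i j : Fin n}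
    (h : Access L i j) : ∃ m : ℕ, 0 < ((1 + P) ^ m) i j := by
  induction h with
  | refl => exact ⟨0, by simp⟩
  | tail _ hbc ih =>
    obtain ⟨m, hm⟩ := ih
    exact ⟨m + 1, aux_pow_succ_pos hP hm (aux_B_pos_of_edge hP hoff (Or.inl hbc))⟩

lemma aux_pow_access (hP : ∀ i j, 0 ≤ P i j)
    (hoff : ∀ i j, i ≠ j → L i j = -(P i j)) {m : ℕ} {i j : Fin n}
    (h : 0 < ((1 + P) ^ m) i j) : Access L i j := by
  induction m generalizing j with
  | zero =>
    rcases eq_or_ne i j with rfl | hne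
    · exact Relation.ReflTransGen.refl
    · rw [pow_zero, Matrix.one_apply_ne hne] at h; exact absurd h (lt_irrefl 0)
  | succ m ih =>
    rw [pow_succ, Matrix.mul_apply] at h
    have hex : ∃ k, ((1 + P) ^ m) i k * (1 + P) k j ≠ 0 := by
      by_contra hc
      push_neg at hc
      rw [Finset.sum_eq_zero (fun k _ => hc k)] at h
      exact lt_irrefl 0 h
    obtain ⟨k, hk⟩ := hex
    have h1 : ((1 + P) ^ m) i k ≠ 0 := fun h0 => hk (by rw [h0, zero_mul])
    have h2 : (1 + P) k j ≠ 0 := fun h0 => hk (by rw [h0, mul_zero])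
    have hik : Access L i k := ih (lt_of_le_of_ne (aux_pow_nonneg hP m i k) (Ne.symm h1))
    rcases eq_or_ne k j with rfl | hne
    · exact hik
    · refine hik.tail ?_
      rw [Matrix.add_apply, Matrix.one_apply_ne hne, zero_add] at h2
      rw [hoff k j hne]
      simpa using h2

lemma aux_uniform (hP : ∀ i j, 0 ≤ P i j)
    (hoff : ∀ i j, i ≠ j → L i j = -(P i j)) :
    ∃ N : ℕ, ∀ i j : Fin n, Access L i j → 0 < ((1 + P) ^ N) i j := by
  classical
  have hch : ∀ ij : Fin n × Fin n,
      ∃ m : ℕ, Access L ij.1 ij.2 → 0 < ((1 + P) ^ m) ij.1 ij.2 := by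
    intro ij
    by_cases h : Access L ij.1 ij.2
    · obtain ⟨m, hm⟩ := aux_access_pow hP hoff h
      exact ⟨m, fun _ => hm⟩
    · exact ⟨0, fun h' => absurd h' h⟩
  choose f hf using hch
  refine ⟨Finset.univ.sup f, fun i j hacc => ?_⟩
  exact aux_pow_mono hP hoff (Finset.le_sup (Finset.mem_univ (i, j))) (hf (i, j) hacc)

end Aux

/-- If `A = L * U` with `A, L, U` M-matrices, `S` a singular class of `L`, `p ∈ S`,
and `p` has access to `q` in `G(A)`, then `p` has access to `q` in `G(L)`. -/
theorem stmt3 {n : ℕ} (A L U : Matrix (Fin n) (Fin n) ℝ)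
    (hA : IsMMatrix A) (hL : IsMMatrix L) (hU : IsMMatrix U) (hfact : A = L * U)
    (S : Finset (Fin n)) (hS : IsSingClass L S)
    (p : Fin n) (hp : p ∈ S) (q : Fin n) (hacc : Access A p q) :
    Access L p q := by
  classical
  obtain ⟨α, P, hP, hαP, hLdef⟩ := hL
  obtain ⟨β, Q, hQ, -, hAdef⟩ := hA
  obtain ⟨γ, W, hW, -, hUdef⟩ := hU
  obtain ⟨⟨p₀, hclass⟩, hdet⟩ := hS
  -- α is nonnegative
  have hα0 : 0 ≤ α := by
    refine le_trans ?_ hαP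
    apply Real.sSup_nonneg
    rintro x ⟨μ, -, rfl⟩
    exact norm_nonneg μ
  -- entry formulas
  have hvm : ∀ (v : Fin n → ℝ) (M : Matrix (Fin n) (Fin n) ℝ) (j : Fin n),
      (v ᵥ* M) j = ∑ i, v i * M i j := by
    intro v M j
    simp [Matrix.vecMul, dotProduct]
  have hLapply : ∀ i j, L i j = α * (1 : Matrix (Fin n) (Fin n) ℝ) i j - P i j := by
    intro i j
    rw [hLdef]
    simp [Matrix.sub_apply]
  have hLoffP : ∀ i j : Fin n, i ≠ j → L i j = -(P i j) := by
    intro i j hij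
    rw [hLapply, Matrix.one_apply_ne hij]
    ring
  have hAoff : ∀ i j : Fin n, i ≠ j → A i j ≤ 0 := by
    intro i j hij
    rw [hAdef]
    simp [Matrix.sub_apply, Matrix.one_apply_ne hij, hQ i j]
  have hUoff : ∀ i j : Fin n, i ≠ j → U i j ≤ 0 := by
    intro i j hij
    rw [hUdef]
    simp [Matrix.sub_apply, Matrix.one_apply_ne hij, hW i j]
  -- class access facts
  have hpp₀ : Access L p₀ p ∧ Access L p p₀ := (hclass p).mp hp
  have hSto : ∀ s, s ∈ S → Access L s p :=
    fun s hs => (((hclass s).mp hs).2).trans hpp₀.1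
  have hSfrom : ∀ s, s ∈ S → Access L p s :=
    fun s hs => hpp₀.2.trans (((hclass s).mp hs).1)
  -- a nonzero null vector of the singular submatrix
  obtain ⟨u, hu0, huL⟩ := Matrix.exists_vecMul_eq_zero_iff.mpr hdet
  set w : Fin n → ℝ := fun i => if h : i ∈ S then |u ⟨i, h⟩| else 0 with hwdef
  have hw0 : ∀ i, 0 ≤ w i := by
    intro i
    by_cases h : i ∈ S
    · simp [hwdef, h, abs_nonneg]
    · simp [hwdef, h]
  have hwS : ∀ i, w i ≠ 0 → i ∈ S := by
    intro i h
    by_contra hc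
    exact h (by simp [hwdef, hc])
  have hsum : ∀ f : Fin n → ℝ, ∑ i, w i * f i = ∑ i : {x // x ∈ S}, |u i| * f i := by
    intro f
    rw [← Finset.sum_subset (Finset.subset_univ S)
      (fun x _ hx => by simp [hwdef, hx])]
    rw [← Finset.sum_coe_sort S (fun i => w i * f i)]
    refine Finset.sum_congr rfl fun i _ => ?_
    have : w i.val = |u i| := by simp [hwdef, i.2]
    rw [this]
  have huP : ∀ j : {x // x ∈ S}, ∑ i : {x // x ∈ S}, u i * P i j = α * u j := by
    intro j
    have h0 := congrFun huL j
    simp only [Matrix.vecMul, dotProduct, Matrix.submatrix_apply, Pi.zero_apply] at h0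
    have hrw : ∀ i : {x // x ∈ S}, u i * L i.val j.val
        = α * (if i = j then u i else 0) - u i * P i.val j.val := by
      intro i
      rw [hLapply]
      rcases eq_or_ne i j with rfl | hne
      · simp only [Matrix.one_apply_eq, if_pos rfl, if_true]
        ring
      · have hne' : (i : Fin n) ≠ (j : Fin n) := fun hc => hne (Subtype.ext hc)
        simp only [Matrix.one_apply_ne hne', if_neg hne]
        ring
    rw [Finset.sum_congr rfl (fun i _ => hrw i), Finset.sum_sub_distrib,
      ← Finset.mul_sum, Finset.sum_ite_eq' Finset.univ j u, if_pos (Finset.mem_univ j)] at h0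
    linarith
  -- subinvariance of |u| spread to all columns
  have hwP : ∀ j : Fin n, α * w j ≤ ∑ i, w i * P i j := by
    intro j
    by_cases hj : j ∈ S
    · rw [hsum (fun i => P i j)]
      have hwj : w j = |u ⟨j, hj⟩| := by simp [hwdef, hj]
      rw [hwj]
      calc α * |u ⟨j, hj⟩| = |α * u ⟨j, hj⟩| := by
            rw [abs_mul, abs_of_nonneg hα0]
        _ = |∑ i : {x // x ∈ S}, u i * P i (⟨j, hj⟩ : {x // x ∈ S})| := by rw [huP ⟨j, hj⟩]
        _ ≤ ∑ i : {x // x ∈ S}, |u i * P i (⟨j, hj⟩ : {x // x ∈ S})| :=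
            Finset.abs_sum_le_sum_abs _ _
        _ = ∑ i : {x // x ∈ S}, |u i| * P i j := by
            refine Finset.sum_congr rfl fun i _ => ?_
            rw [abs_mul, abs_of_nonneg (hP i j)]
    · have hwj : w j = 0 := by simp [hwdef, hj]
      rw [hwj, mul_zero]
      exact Finset.sum_nonneg fun i _ => mul_nonneg (hw0 i) (hP i j)
  have hwL : ∀ j : Fin n, (w ᵥ* L) j ≤ 0 := by
    intro j
    rw [hvm]
    have hLs : ∑ i, w i * L i j = α * w j - ∑ i, w i * P i j := by
      have : ∀ i, w i * L i j
          = α * (if i = j then w i else 0) - w i * P i j := by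
        intro i
        rw [hLapply]
        rcases eq_or_ne i j with rfl | hne
        · simp only [Matrix.one_apply_eq, if_pos rfl, if_true]; ring
        · simp only [Matrix.one_apply_ne hne, if_neg hne]; ring
      rw [Finset.sum_congr rfl (fun i _ => this i), Finset.sum_sub_distrib,
        ← Finset.mul_sum, Finset.sum_ite_eq' Finset.univ j w, if_pos (Finset.mem_univ j)]
    rw [hLs]
    linarith [hwP j]
  -- the positive vector z supported exactly on the reachable set of p
  obtain ⟨N, hN⟩ := aux_uniform hP hLoffP
  set z : Fin n → ℝ := w ᵥ* ((1 + P) ^ N) with hzdef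
  have hzapply : ∀ j, z j = ∑ i, w i * ((1 + P) ^ N) i j := fun j => hvm w _ j
  have hz0 : ∀ j, 0 ≤ z j := by
    intro j
    rw [hzapply]
    exact Finset.sum_nonneg fun i _ => mul_nonneg (hw0 i) (aux_pow_nonneg hP N i j)
  have hwex : ∃ s : Fin n, 0 < w s ∧ s ∈ S := by
    obtain ⟨s, hs⟩ := Function.ne_iff.mp hu0
    refine ⟨s.val, ?_, s.2⟩
    have : w s.val = |u s| := by simp [hwdef, s.2]
    rw [this]
    exact abs_pos.mpr (by simpa using hs)
  have hzpos : ∀ j, Access L p j → 0 < z j := by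
    intro j hj
    obtain ⟨s, hws, hsS⟩ := hwex
    have hsj : Access L s j := (hSto s hsS).trans hj
    have hpow := hN s j hsj
    rw [hzapply]
    calc (0:ℝ) < w s * ((1 + P) ^ N) s j := mul_pos hws hpow
      _ ≤ ∑ i, w i * ((1 + P) ^ N) i j :=
          Finset.single_le_sum (f := fun i => w i * ((1 + P) ^ N) i j)
            (fun i _ => mul_nonneg (hw0 i) (aux_pow_nonneg hP N i j)) (Finset.mem_univ s)
  have hzzero : ∀ j, ¬ Access L p j → z j = 0 := by
    intro j hj
    rw [hzapply]
    refine Finset.sum_eq_zero fun i _ => ?_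
    by_cases hwi : w i = 0
    · rw [hwi, zero_mul]
    · have hiS : i ∈ S := hwS i hwi
      have hBz : ((1 + P) ^ N) i j = 0 := by
        by_contra hc
        have hpos : 0 < ((1 + P) ^ N) i j :=
          lt_of_le_of_ne (aux_pow_nonneg hP N i j) (Ne.symm hc)
        exact hj ((hSfrom i hiS).trans (aux_pow_access hP hLoffP hpos))
      rw [hBz, mul_zero]
  -- z^T L is nonpositive, and vanishes off the reachable set
  have hcommP : L * P = P * L := by
    rw [hLdef]
    rw [Matrix.sub_mul, Matrix.mul_sub, Matrix.smul_mul, Matrix.mul_smul,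
      Matrix.one_mul, Matrix.mul_one]
  have hcomm : L * (1 + P) ^ N = (1 + P) ^ N * L := by
    have h1 : Commute L (1 + P) := Commute.add_right (Commute.one_right L) hcommP
    exact (h1.pow_right N).eq
  have hzL : ∀ m, (z ᵥ* L) m ≤ 0 := by
    intro m
    have hswap : z ᵥ* L = (w ᵥ* L) ᵥ* ((1 + P) ^ N) := by
      rw [hzdef, Matrix.vecMul_vecMul, ← hcomm, ← Matrix.vecMul_vecMul]
    rw [hswap, hvm]
    refine Finset.sum_nonpos fun i _ => ?_
    have h1 := hwL i
    have h2 := aux_pow_nonneg hP N i m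
    nlinarith
  have hzLzero : ∀ m, ¬ Access L p m → (z ᵥ* L) m = 0 := by
    intro m hm
    rw [hvm]
    refine Finset.sum_eq_zero fun i _ => ?_
    by_cases hi : Access L p i
    · have hLim : L i m = 0 := by
        by_contra hc
        exact hm (hi.tail hc)
      rw [hLim, mul_zero]
    · rw [hzzero i hi, zero_mul]
  -- closure of the reachable set of p under edges of A
  have hclosed : ∀ i j : Fin n, Access L p i → A i j ≠ 0 → Access L p j := by
    intro i j hi hAij
    by_contra hj
    have hterm : ∀ i', z i' * A i' j ≤ 0 := by
      intro i'
      by_cases h : Access L p i'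
      · have hne : i' ≠ j := fun he => hj (he ▸ h)
        have h1 := hz0 i'
        have h2 := hAoff i' j hne
        nlinarith
      · rw [hzzero i' h, zero_mul]
    have h1 : ∑ i', z i' * A i' j ≤ 0 := Finset.sum_nonpos fun i' _ => hterm i'
    have h2 : 0 ≤ ∑ i', z i' * A i' j := by
      have hzA : ∑ i', z i' * A i' j = ∑ m, (z ᵥ* L) m * U m j := by
        have h3 : (z ᵥ* A) j = ((z ᵥ* L) ᵥ* U) j := by
          rw [hfact, ← Matrix.vecMul_vecMul]
        rw [hvm, hvm] at h3
        exact h3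
      rw [hzA]
      refine Finset.sum_nonneg fun m _ => ?_
      by_cases hm : Access L p m
      · have hne : m ≠ j := fun he => hj (he ▸ hm)
        have h4 := hzL m
        have h5 := hUoff m j hne
        nlinarith
      · rw [hzLzero m hm, zero_mul]
    have hzero : ∑ i', z i' * A i' j = 0 := le_antisymm h1 h2
    have heach := (Finset.sum_eq_zero_iff_of_nonpos
      (fun i' _ => hterm i')).mp hzero i (Finset.mem_univ i)
    have hzi := hzpos i hi
    rcases mul_eq_zero.mp heach with h | h
    · exact absurd h (ne_of_gt hzi)
    · exact hAij h
  -- conclude by induction along the access path in G(A)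
  induction hacc with
  | refl => exact Relation.ReflTransGen.refl
  | tail _ hbc ih => exact hclosed _ _ ih hbc
end

section
/- Let A be an n×n M-matrix with A = LU where L and U are M-matrices. Let S be a singular class of U. Then for any p ∈ S and any q ∈ {1,…,n}, if q has access to p in the directed graph of A, then q has access to p in the directed graph of U. -/
open Matrix

/- ------------------------------------------------------------------ -/
/- Auxiliary lemmas                                                    -/
/- ------------------------------------------------------------------ -/

private lemma aux_mul_nonneg_of_nonpos_nonpos {a b : ℝ} (ha : a ≤ 0) (hb : b ≤ 0) :
    0 ≤ a * b := by
  have := mul_nonneg (neg_nonneg.2 ha) (neg_nonneg.2 hb)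
  rwa [neg_mul_neg] at this

/-- Off-diagonal entries of an M-matrix are nonpositive. -/
private lemma aux_offdiag_nonpos {m : Type*} [Fintype m] [DecidableEq m]
    {A : Matrix m m ℝ} (h : IsMMatrix A) {i j : m} (hij : i ≠ j) : A i j ≤ 0 := by
  obtain ⟨α, P, hP, -, rfl⟩ := h
  have : (α • (1 : Matrix m m ℝ) - P) i j = -(P i j) := by
    simp [Matrix.sub_apply, Matrix.smul_apply, Matrix.one_apply, hij]
  rw [this]
  exact neg_nonpos.2 (hP i j)

/-- If `A = L * U` with `A, L, U` M-matrices, `S` a singular class of `U`, `p ∈ S`,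
and `q` has access to `p` in `G(A)`, then `q` has access to `p` in `G(U)`. -/
theorem stmt4 {n : ℕ} (A L U : Matrix (Fin n) (Fin n) ℝ)
    (hA : IsMMatrix A) (hL : IsMMatrix L) (hU : IsMMatrix U) (hfact : A = L * U)
    (S : Finset (Fin n)) (hS : IsSingClass U S)
    (p : Fin n) (hp : p ∈ S) (q : Fin n) (hacc : Access A q p) :
    Access U q p := by
  classical
  obtain ⟨hclass, hdet⟩ := hS
  obtain ⟨p₀, hp₀⟩ := hclass
  -- access facts between S and p
  have hSp : ∀ s ∈ S, Access U s p := fun s hs =>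
    Relation.ReflTransGen.trans ((hp₀ s).1 hs).2 ((hp₀ p).1 hp).1
  have hpS : ∀ s ∈ S, Access U p s := fun s hs =>
    Relation.ReflTransGen.trans ((hp₀ p).1 hp).2 ((hp₀ s).1 hs).1
  -- off-diagonal sign facts
  have hAod : ∀ i j : Fin n, i ≠ j → A i j ≤ 0 := fun i j hij => aux_offdiag_nonpos hA hij
  have hLod : ∀ i j : Fin n, i ≠ j → L i j ≤ 0 := fun i j hij => aux_offdiag_nonpos hL hij
  have hUod : ∀ i j : Fin n, i ≠ j → U i j ≤ 0 := fun i j hij => aux_offdiag_nonpos hU hij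
  -- a real null vector of U_SS
  obtain ⟨v, hv0, hv⟩ := (Matrix.exists_mulVec_eq_zero_iff).2 hdet
  -- extend it by zero to all of Fin n
  set w : Fin n → ℝ := fun j => if h : j ∈ S then v ⟨j, h⟩ else 0 with hw
  have hw_supp : ∀ j, w j ≠ 0 → j ∈ S := by
    intro j hj
    by_contra hjS
    exact hj (by simp [hw, hjS])
  have hsum : ∀ i, i ∈ S → ∑ j, U i j * w j = 0 := by
    intro i hiS
    have h1 : ∑ j, U i j * w j = ∑ j ∈ S, U i j * w j := by
      refine (Finset.sum_subset (Finset.subset_univ S) ?_).symm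
      intro x _ hxS
      have : w x = 0 := by simp [hw, hxS]
      simp [this]
    have h2 : ∑ j ∈ S, U i j * w j = ∑ j : S, U i (↑j) * v j := by
      rw [← Finset.sum_coe_sort S (fun j => U i j * w j)]
      refine Finset.sum_congr rfl ?_
      intro j _
      congr 1
      simp [hw, j.2]
    have h3 : ∑ j : S, U i (↑j) * v j = 0 := by
      have := congrFun hv (⟨i, hiS⟩ : S)
      simpa [Matrix.mulVec, dotProduct, Matrix.submatrix_apply] using this
    rw [h1, h2, h3]
  -- initial vector: absolute values of the null vector
  set x₀ : Fin n → ℝ := fun j => |w j| with hx₀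
  -- the invariant
  set Inv : (Fin n → ℝ) → Prop := fun x =>
    (∀ j, 0 ≤ x j) ∧ (∀ j, x j ≠ 0 → Access U j p) ∧ (∀ i, (U *ᵥ x) i ≤ 0) ∧
      (∃ s, Access U p s ∧ 0 < x s) with hInv
  have hx₀Inv : Inv x₀ := by
    refine ⟨fun j => abs_nonneg _, ?_, ?_, ?_⟩
    · intro j hj
      have : w j ≠ 0 := fun h => hj (by simp [hx₀, h])
      exact hSp j (hw_supp j this)
    · intro i
      by_cases hiS : i ∈ S
      · -- use triangle inequality with the null relation
        have h0 : ∑ j, U i j * w j = 0 := hsum i hiS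
        have key : ∑ j, U i j * |w j| ≤ 0 := by
          have e1 : U i i * |w i| + ∑ j ∈ Finset.univ.erase i, U i j * |w j|
              = ∑ j, U i j * |w j| :=
                Finset.add_sum_erase _ (fun j => U i j * |w j|) (Finset.mem_univ i)
          have e2 : U i i * w i + ∑ j ∈ Finset.univ.erase i, U i j * w j
              = ∑ j, U i j * w j :=
                Finset.add_sum_erase _ (fun j => U i j * w j) (Finset.mem_univ i)
          have hdiag : U i i * w i = -∑ j ∈ Finset.univ.erase i, U i j * w j := by
            rw [h0] at e2; linarith
          have habs : |U i i * w i| ≤ ∑ j ∈ Finset.univ.erase i, -(U i j) * |w j| := by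
            rw [hdiag, abs_neg]
            refine (Finset.abs_sum_le_sum_abs _ _).trans ?_
            refine Finset.sum_le_sum ?_
            intro j hj
            have hji : j ≠ i := Finset.ne_of_mem_erase hj
            have : |U i j| = -(U i j) := abs_of_nonpos (hUod i j (Ne.symm hji))
            rw [abs_mul, this]
          have h4 : U i i * |w i| ≤ |U i i * w i| := by
            rw [abs_mul]
            exact mul_le_mul_of_nonneg_right (le_abs_self _) (abs_nonneg _)
          have h5 : ∑ j ∈ Finset.univ.erase i, U i j * |w j|
              = -∑ j ∈ Finset.univ.erase i, -(U i j) * |w j| := by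
            rw [← Finset.sum_neg_distrib]
            refine Finset.sum_congr rfl ?_
            intro j _; ring
          linarith [e1, habs, h4, h5.ge, h5.le]
        simpa [Matrix.mulVec, dotProduct, hx₀] using key
      · -- row outside S: all terms nonpositive
        have : ∀ j ∈ Finset.univ, U i j * |w j| ≤ 0 := by
          intro j _
          by_cases hjw : w j = 0
          · simp [hjw]
          · have hjS : j ∈ S := hw_supp j hjw
            have hij : i ≠ j := fun h => hiS (h ▸ hjS)
            exact mul_nonpos_iff.2 (Or.inr ⟨hUod i j hij, abs_nonneg _⟩)
        simpa [Matrix.mulVec, dotProduct, hx₀] using Finset.sum_nonpos this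
    · -- some positive entry in S
      have : ∃ j : S, v j ≠ 0 := by
        by_contra h
        push_neg at h
        exact hv0 (funext fun j => h j)
      obtain ⟨j, hj⟩ := this
      refine ⟨(j : Fin n), hpS _ j.2, ?_⟩
      have : w (j : Fin n) = v j := by simp [hw, j.2]
      simp only [hx₀]
      rw [this]
      exact abs_pos.2 hj
  -- augmentation lemma
  have haug : ∀ x a b, Inv x → x a = 0 → U a b ≠ 0 → 0 < x b →
      ∃ x', Inv x' ∧ (∀ j, x j ≤ x' j) ∧ 0 < x' a := by
    intro x a b hx hxa hUab hxb
    obtain ⟨hxn, hxT, hxU, s, hps, hxs⟩ := hx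
    have hba : b ≠ a := fun h => (ne_of_gt hxb) (h ▸ hxa)
    have haT : Access U a p := Relation.ReflTransGen.head hUab (hxT b (ne_of_gt hxb))
    have hUab_neg : U a b < 0 := lt_of_le_of_ne (hUod a b (Ne.symm hba)) hUab
    have hneg : (U *ᵥ x) a < 0 := by
      have hle : ∑ j, U a j * x j ≤ ∑ j, (if j = b then U a b * x b else 0) := by
        refine Finset.sum_le_sum ?_
        intro j _
        by_cases hjb : j = b
        · subst hjb; simp
        · simp only [hjb, if_false]
          by_cases hj0 : x j = 0
          · simp [hj0]
          · have hja : j ≠ a := fun h => hj0 (h ▸ hxa)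
            exact mul_nonpos_iff.2 (Or.inr ⟨hUod a j (Ne.symm hja), hxn j⟩)
      have heq : ∑ j, (if j = b then U a b * x b else 0) = U a b * x b := by simp
      have : (U *ᵥ x) a = ∑ j, U a j * x j := rfl
      rw [this]
      calc ∑ j, U a j * x j ≤ U a b * x b := heq ▸ hle
        _ < 0 := mul_neg_of_neg_of_pos hUab_neg hxb
    set c : ℝ := (U *ᵥ x) a with hc
    set d : ℝ := |U a a| + 1 with hd
    have hd_pos : 0 < d := by positivity
    set ε : ℝ := -c / d with hε
    have hε_pos : 0 < ε := div_pos (neg_pos.2 hneg) hd_pos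
    set x' : Fin n → ℝ := fun j => x j + if j = a then ε else 0 with hx'
    have hmono : ∀ j, x j ≤ x' j := by
      intro j
      simp only [hx']
      by_cases hja : j = a <;> simp [hja, le_of_lt hε_pos]
    have hx'a : 0 < x' a := by
      show 0 < x a + if a = a then ε else 0
      simp [hxa, hε_pos]
    have hUx' : ∀ i, (U *ᵥ x') i = (U *ᵥ x) i + U i a * ε := by
      intro i
      show ∑ j, U i j * x' j = (∑ j, U i j * x j) + U i a * ε
      simp only [hx', mul_add, Finset.sum_add_distrib, mul_ite, mul_zero]
      congr 1
      simp
    refine ⟨x', ⟨?_, ?_, ?_, ?_⟩, hmono, hx'a⟩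
    · intro j; exact le_trans (hxn j) (hmono j)
    · intro j hj
      by_cases hja : j = a
      · exact hja ▸ haT
      · have : x' j = x j := by simp [hx', hja]
        exact hxT j (this ▸ hj)
    · intro i
      rw [hUx' i]
      by_cases hia : i = a
      · subst hia
        have h1 : U i i * ε ≤ |U i i| * ε := mul_le_mul_of_nonneg_right (le_abs_self _) hε_pos.le
        have h2 : |U i i| * ε ≤ d * ε := by
          refine mul_le_mul_of_nonneg_right ?_ hε_pos.le
          simp [hd]
        have h3 : d * ε = -c := by
          rw [hε, mul_div_cancel₀]
          exact ne_of_gt hd_pos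
        have : (U *ᵥ x) i = c := rfl
        rw [this]
        linarith
      · have : U i a ≤ 0 := hUod i a hia
        have h1 : U i a * ε ≤ 0 := mul_nonpos_iff.2 (Or.inr ⟨this, hε_pos.le⟩)
        linarith [hxU i]
    · exact ⟨s, hps, lt_of_lt_of_le hxs (hmono s)⟩
  -- path lemma: find an augmentation point
  have hpath : ∀ (x : Fin n → ℝ), (∀ j, 0 ≤ x j) → ∀ t s, Access U t s → 0 < x s →
      0 < x t ∨ ∃ a b, x a = 0 ∧ U a b ≠ 0 ∧ 0 < x b := by
    intro x hxn t s h hs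
    induction h using Relation.ReflTransGen.head_induction_on with
    | refl => exact Or.inl hs
    | head hr _ ih =>
      rename_i a' c' _
      rcases ih with hc | hfound
      · by_cases ha' : 0 < x a'
        · exact Or.inl ha'
        · exact Or.inr ⟨a', c', le_antisymm (not_lt.1 ha') (hxn a'), hr, hc⟩
      · exact Or.inr hfound
  -- grow the support until it covers all of T
  have hgrow : ∀ k : ℕ, ∀ x, Inv x →
      (Finset.univ.filter (fun j => Access U j p ∧ x j = 0)).card ≤ k →
      ∃ x', Inv x' ∧ ∀ t, Access U t p → 0 < x' t := by
    intro k
    induction k with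
    | zero =>
      intro x hx hcard
      refine ⟨x, hx, fun t ht => ?_⟩
      have hempty := Finset.card_eq_zero.1 (Nat.le_zero.1 hcard)
      by_contra hpos
      have hzero : x t = 0 := le_antisymm (not_lt.1 hpos) (hx.1 t)
      have : t ∈ Finset.univ.filter (fun j => Access U j p ∧ x j = 0) :=
        Finset.mem_filter.2 ⟨Finset.mem_univ t, ht, hzero⟩
      rw [hempty] at this
      exact absurd this (Finset.notMem_empty t)
    | succ k ih =>
      intro x hx hcard
      by_cases hall : ∀ t, Access U t p → x t ≠ 0
      · exact ⟨x, hx, fun t ht => lt_of_le_of_ne (hx.1 t) (Ne.symm (hall t ht))⟩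
      · push_neg at hall
        obtain ⟨t, htT, hxt⟩ := hall
        obtain ⟨s, hps, hxs⟩ := hx.2.2.2
        have hts : Access U t s := Relation.ReflTransGen.trans htT hps
        rcases hpath x hx.1 t s hts hxs with hlt | ⟨a, b, hxa, hUab, hxb⟩
        · exact absurd hxt (ne_of_gt hlt)
        · obtain ⟨x', hx', hmono, hx'a⟩ := haug x a b hx hxa hUab hxb
          refine ih x' hx' ?_
          have haT : Access U a p :=
            Relation.ReflTransGen.head hUab (hx.2.1 b (ne_of_gt hxb))
          have ha_mem : a ∈ Finset.univ.filter (fun j => Access U j p ∧ x j = 0) :=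
            Finset.mem_filter.2 ⟨Finset.mem_univ a, haT, hxa⟩
          have hsub : Finset.univ.filter (fun j => Access U j p ∧ x' j = 0) ⊆
              (Finset.univ.filter (fun j => Access U j p ∧ x j = 0)).erase a := by
            intro j hj
            obtain ⟨-, hjT, hj0⟩ := Finset.mem_filter.1 hj
            have hja : j ≠ a := fun h => (ne_of_gt hx'a) (h ▸ hj0)
            have hxj : x j = 0 := le_antisymm (hj0 ▸ hmono j) (hx.1 j)
            exact Finset.mem_erase.2 ⟨hja, Finset.mem_filter.2 ⟨Finset.mem_univ j, hjT, hxj⟩⟩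
          calc (Finset.univ.filter (fun j => Access U j p ∧ x' j = 0)).card
              ≤ ((Finset.univ.filter (fun j => Access U j p ∧ x j = 0)).erase a).card :=
                Finset.card_le_card hsub
            _ = (Finset.univ.filter (fun j => Access U j p ∧ x j = 0)).card - 1 :=
                Finset.card_erase_of_mem ha_mem
            _ ≤ k := by omega
  obtain ⟨x, hxInv, hxpos⟩ := hgrow _ x₀ hx₀Inv le_rfl
  -- closure of T under A-predecessors
  have hclose : ∀ i j, ¬ Access U i p → Access U j p → A i j = 0 := by
    intro i j hi hj
    have h1 : ∀ k ∈ Finset.univ, A i k * x k ≤ 0 := by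
      intro k _
      by_cases hk0 : x k = 0
      · simp [hk0]
      · have hkT : Access U k p := hxInv.2.1 k hk0
        have hik : i ≠ k := fun h => hi (h ▸ hkT)
        exact mul_nonpos_iff.2 (Or.inr ⟨hAod i k hik, hxInv.1 k⟩)
    have hsum1 : (A *ᵥ x) i ≤ 0 := Finset.sum_nonpos h1
    have h2 : ∀ k ∈ Finset.univ, 0 ≤ L i k * (U *ᵥ x) k := by
      intro k _
      by_cases hk0 : (U *ᵥ x) k = 0
      · simp [hk0]
      · have : ∃ j', U k j' * x j' ≠ 0 := by
          have hk0' : ∑ j', U k j' * x j' ≠ 0 := hk0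
          obtain ⟨j', _, hj'⟩ := Finset.exists_ne_zero_of_sum_ne_zero hk0'
          exact ⟨j', hj'⟩
        obtain ⟨j', hj'⟩ := this
        have hUkj : U k j' ≠ 0 := fun h => hj' (by simp [h])
        have hxj' : x j' ≠ 0 := fun h => hj' (by simp [h])
        have hkT : Access U k p := Relation.ReflTransGen.head hUkj (hxInv.2.1 j' hxj')
        have hik : i ≠ k := fun h => hi (h ▸ hkT)
        exact aux_mul_nonneg_of_nonpos_nonpos (hLod i k hik) (hxInv.2.2.1 k)
    have hsum2 : 0 ≤ (L *ᵥ (U *ᵥ x)) i := Finset.sum_nonneg h2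
    have heq : A *ᵥ x = L *ᵥ (U *ᵥ x) := by rw [hfact, ← Matrix.mulVec_mulVec]
    have hzero : (A *ᵥ x) i = 0 := le_antisymm hsum1 (heq ▸ hsum2)
    have hterm : A i j * x j = 0 :=
      (Finset.sum_eq_zero_iff_of_nonpos h1).1 hzero j (Finset.mem_univ j)
    exact (mul_eq_zero.1 hterm).resolve_right (ne_of_gt (hxpos j hj))
  -- conclude by induction along the A-path
  induction hacc using Relation.ReflTransGen.head_induction_on with
  | refl => exact Relation.ReflTransGen.refl
  | head hr _ ih =>
    rename_i a' c' _
    by_cases h' : Access U a' p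
    · exact h'
    · exact absurd (hclose a' c' h' ih) hr
end

section
/- The 3×3 matrix A with A_{12} = A_{32} = −1 and all other entries zero is an M-matrix that admits a factorization A = LU into a lower triangular M-matrix L and an upper triangular M-matrix U with both L and U singular; specifically L = [[1,0,0],[0,0,0],[0,−1,0]] and U = [[0,−1,0],[0,1,0],[0,0,0]] works. -/
open Matrix

lemma specRad_le_of (P : Matrix (Fin 3) (Fin 3) ℝ) (α : ℝ) (hα : 0 ≤ α)
    (h : ∀ μ : ℂ, (μ • (1 : Matrix (Fin 3) (Fin 3) ℂ) - P.map Complex.ofReal).det = 0 →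
      ‖μ‖ ≤ α) :
    specRad P ≤ α := by
  apply Real.sSup_le _ hα
  rintro r ⟨μ, hμ, rfl⟩
  apply h
  rw [spectrum.mem_iff, Algebra.algebraMap_eq_smul_one,
    Matrix.isUnit_iff_isUnit_det, isUnit_iff_ne_zero, not_not] at hμ
  exact hμ

/-- The given `3 × 3` M-matrix `A` admits the LU factorization `A = L * U` with
`L` a singular lower triangular M-matrix and `U` a singular upper triangular M-matrix. -/
theorem stmt5 :
    IsMMatrix (!![(0:ℝ), -1, 0; 0, 0, 0; 0, -1, 0]) ∧
    IsMMatrix (!![(1:ℝ), 0, 0; 0, 0, 0; 0, -1, 0]) ∧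
    IsMMatrix (!![(0:ℝ), -1, 0; 0, 1, 0; 0, 0, 0]) ∧
    LowerTri (!![(1:ℝ), 0, 0; 0, 0, 0; 0, -1, 0]) ∧
    UpperTri (!![(0:ℝ), -1, 0; 0, 1, 0; 0, 0, 0]) ∧
    (!![(1:ℝ), 0, 0; 0, 0, 0; 0, -1, 0]).det = 0 ∧
    (!![(0:ℝ), -1, 0; 0, 1, 0; 0, 0, 0]).det = 0 ∧
    !![(0:ℝ), -1, 0; 0, 0, 0; 0, -1, 0] =
      !![(1:ℝ), 0, 0; 0, 0, 0; 0, -1, 0] * !![(0:ℝ), -1, 0; 0, 1, 0; 0, 0, 0] := by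
  have hdet : ∀ μ : ℂ, ∀ a b c d e : ℂ,
      (μ • (1 : Matrix (Fin 3) (Fin 3) ℂ) -
        (!![a, b, 0; 0, c, 0; 0, d, e] : Matrix (Fin 3) (Fin 3) ℂ)).det
        = (μ - a) * (μ - c) * (μ - e) := by
    intro μ a b c d e
    simp [Matrix.det_fin_three, Matrix.one_apply, Matrix.vecHead, Matrix.vecTail]
  refine ⟨?_, ?_, ?_, ?_, ?_, ?_, ?_, ?_⟩
  · refine ⟨1, !![1, 1, 0; 0, 1, 0; 0, 1, 1], ?_, ?_, ?_⟩
    · intro i j; fin_cases i <;> fin_cases j <;> norm_num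
    · apply specRad_le_of _ _ zero_le_one
      intro μ hμ
      have hmap : (!![(1:ℝ), 1, 0; 0, 1, 0; 0, 1, 1]).map Complex.ofReal
          = !![(1:ℂ), 1, 0; 0, 1, 0; 0, 1, 1] := by
        ext i j; fin_cases i <;> fin_cases j <;> simp [Matrix.vecHead, Matrix.vecTail]
      rw [hmap, hdet μ 1 1 1 1 1] at hμ
      rcases mul_eq_zero.1 hμ with h | h
      · rcases mul_eq_zero.1 h with h | h <;>
        · rw [sub_eq_zero] at h; simp [h]
      · rw [sub_eq_zero] at h; simp [h]
    · ext i j; fin_cases i <;> fin_cases j <;>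
        simp [Matrix.one_apply, Matrix.vecHead, Matrix.vecTail]
  · refine ⟨1, !![0, 0, 0; 0, 1, 0; 0, 1, 1], ?_, ?_, ?_⟩
    · intro i j; fin_cases i <;> fin_cases j <;> norm_num
    · apply specRad_le_of _ _ zero_le_one
      intro μ hμ
      have hmap : (!![(0:ℝ), 0, 0; 0, 1, 0; 0, 1, 1]).map Complex.ofReal
          = !![(0:ℂ), 0, 0; 0, 1, 0; 0, 1, 1] := by
        ext i j; fin_cases i <;> fin_cases j <;> simp [Matrix.vecHead, Matrix.vecTail]
      rw [hmap, hdet μ 0 0 1 1 1] at hμ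
      rcases mul_eq_zero.1 hμ with h | h
      · rcases mul_eq_zero.1 h with h | h <;>
        · rw [sub_eq_zero] at h; simp [h]
      · rw [sub_eq_zero] at h; simp [h]
    · ext i j; fin_cases i <;> fin_cases j <;>
        simp [Matrix.one_apply, Matrix.vecHead, Matrix.vecTail]
  · refine ⟨1, !![1, 1, 0; 0, 0, 0; 0, 0, 1], ?_, ?_, ?_⟩
    · intro i j; fin_cases i <;> fin_cases j <;> norm_num
    · apply specRad_le_of _ _ zero_le_one
      intro μ hμ
      have hmap : (!![(1:ℝ), 1, 0; 0, 0, 0; 0, 0, 1]).map Complex.ofReal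
          = !![(1:ℂ), 1, 0; 0, 0, 0; 0, 0, 1] := by
        ext i j; fin_cases i <;> fin_cases j <;> simp [Matrix.vecHead, Matrix.vecTail]
      rw [hmap, hdet μ 1 1 0 0 1] at hμ
      rcases mul_eq_zero.1 hμ with h | h
      · rcases mul_eq_zero.1 h with h | h <;>
        · rw [sub_eq_zero] at h; simp [h]
      · rw [sub_eq_zero] at h; simp [h]
    · ext i j; fin_cases i <;> fin_cases j <;>
        simp [Matrix.one_apply, Matrix.vecHead, Matrix.vecTail]
  · intro i j hij; fin_cases i <;> fin_cases j <;> simp_all [Matrix.vecHead, Matrix.vecTail, Fin.lt_def]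
  · intro i j hij; fin_cases i <;> fin_cases j <;> simp_all [Matrix.vecHead, Matrix.vecTail, Fin.lt_def]
  · simp [Matrix.det_fin_three, Matrix.vecHead, Matrix.vecTail]
  · simp [Matrix.det_fin_three, Matrix.vecHead, Matrix.vecTail]
  · ext i j; fin_cases i <;> fin_cases j <;>
      simp [Matrix.mul_apply, Fin.sum_univ_three, Matrix.vecHead, Matrix.vecTail]
end

section
/- The 3×3 M-matrix A with A_{12} = A_{32} = −1 and all other entries zero does not admit a factorization A = LU with L a nonsingular lower triangular M-matrix and U an upper triangular M-matrix. -/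
open Matrix

lemma specRad_bdd {m : Type*} [Fintype m] [DecidableEq m] (P : Matrix m m ℝ) :
    BddAbove {r : ℝ | ∃ μ ∈ spectrum ℂ (P.map (Complex.ofReal)), r = ‖μ‖} := by
  apply Set.Finite.bddAbove
  apply Set.Finite.subset ((Matrix.finite_spectrum (P.map (Complex.ofReal))).image (fun z : ℂ => ‖z‖))
  rintro r ⟨μ, hμ, rfl⟩
  exact ⟨μ, hμ, rfl⟩

lemma diag_le_specRad (P : Matrix (Fin 3) (Fin 3) ℝ) (i : Fin 3)
    (h : ((P i i : ℝ) : ℂ) ∈ spectrum ℂ (P.map (Complex.ofReal))) :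
    P i i ≤ specRad P :=
  le_trans (le_abs_self _)
    (le_csSup (specRad_bdd P) ⟨_, h, by simp⟩)

lemma mem_spec_of_det (P : Matrix (Fin 3) (Fin 3) ℝ) (μ : ℂ)
    (h : ((algebraMap ℂ (Matrix (Fin 3) (Fin 3) ℂ)) μ - P.map (Complex.ofReal)).det = 0) :
    μ ∈ spectrum ℂ (P.map (Complex.ofReal)) := by
  rw [spectrum.mem_iff, Matrix.isUnit_iff_isUnit_det, isUnit_iff_ne_zero]
  simpa using h

lemma det_char (P : Matrix (Fin 3) (Fin 3) ℝ) (μ : ℂ) :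
    ((algebraMap ℂ (Matrix (Fin 3) (Fin 3) ℂ)) μ - P.map (Complex.ofReal)).det =
      (μ - P 0 0)*((μ - P 1 1)*(μ - P 2 2) - (P 1 2)*(P 2 1)) -
      (-P 0 1)*((-P 1 0)*(μ - P 2 2) - (P 1 2)*(P 2 0)) +
      (-P 0 2)*((-P 1 0)*(-P 2 1) - (μ - P 1 1)*(-P 2 0)) := by
  rw [Matrix.det_fin_three]
  simp [Matrix.algebraMap_matrix_apply, Matrix.map_apply]
  ring

/-- diagonal entries of a triangular M-matrix are nonnegative -/
lemma diag_nonneg (L : Matrix (Fin 3) (Fin 3) ℝ) (hM : IsMMatrix L)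
    (hT : LowerTri L ∨ UpperTri L) (i : Fin 3) : 0 ≤ L i i := by
  obtain ⟨α, P, hP, hα, rfl⟩ := hM
  have hoff : ∀ a b : Fin 3, a ≠ b → P a b = (α • (1 : Matrix (Fin 3) (Fin 3) ℝ) - P) a b * (-1) := by
    intro a b hab
    simp [Matrix.sub_apply, Matrix.smul_apply, Matrix.one_apply_ne hab]
  have hspec : ((P i i : ℝ) : ℂ) ∈ spectrum ℂ (P.map (Complex.ofReal)) := by
    apply mem_spec_of_det
    rw [det_char]
    rcases hT with hT | hT
    · have h01 : P 0 1 = 0 := by rw [hoff 0 1 (by decide), hT 0 1 (by decide)]; ring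
      have h02 : P 0 2 = 0 := by rw [hoff 0 2 (by decide), hT 0 2 (by decide)]; ring
      have h12 : P 1 2 = 0 := by rw [hoff 1 2 (by decide), hT 1 2 (by decide)]; ring
      fin_cases i <;> simp [h01, h02, h12] <;> ring
    · have h10 : P 1 0 = 0 := by rw [hoff 1 0 (by decide), hT 1 0 (by decide)]; ring
      have h20 : P 2 0 = 0 := by rw [hoff 2 0 (by decide), hT 2 0 (by decide)]; ring
      have h21 : P 2 1 = 0 := by rw [hoff 2 1 (by decide), hT 2 1 (by decide)]; ring
      fin_cases i <;> simp [h10, h20, h21] <;> ring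
  have := le_trans (diag_le_specRad P i hspec) hα
  simp [Matrix.sub_apply, Matrix.smul_apply, Matrix.one_apply_eq]
  linarith

lemma offdiag_nonpos (L : Matrix (Fin 3) (Fin 3) ℝ) (hM : IsMMatrix L)
    (i j : Fin 3) (hij : i ≠ j) : L i j ≤ 0 := by
  obtain ⟨α, P, hP, hα, rfl⟩ := hM
  simp [Matrix.sub_apply, Matrix.smul_apply, Matrix.one_apply_ne hij]
  exact hP i j

/-- The given `3 × 3` M-matrix admits no factorization `A = L * U` with `L` a
nonsingular lower triangular M-matrix and `U` an upper triangular M-matrix. -/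
theorem stmt6 :
    IsMMatrix (!![(0:ℝ), -1, 0; 0, 0, 0; 0, -1, 0]) ∧
    ¬ ∃ L U : Matrix (Fin 3) (Fin 3) ℝ,
        IsMMatrix L ∧ LowerTri L ∧ IsUnit L ∧ IsMMatrix U ∧ UpperTri U ∧
        !![(0:ℝ), -1, 0; 0, 0, 0; 0, -1, 0] = L * U := by
  constructor
  · refine ⟨0, !![(0:ℝ), 1, 0; 0, 0, 0; 0, 1, 0], ?_, ?_, ?_⟩
    · intro i j; fin_cases i <;> fin_cases j <;> norm_num
    · apply Real.sSup_le _ le_rfl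
      rintro r ⟨μ, hμ, rfl⟩
      have hdet : ((algebraMap ℂ (Matrix (Fin 3) (Fin 3) ℂ)) μ -
          (!![(0:ℝ), 1, 0; 0, 0, 0; 0, 1, 0]).map (Complex.ofReal)).det = 0 := by
        by_contra h
        exact spectrum.notMem_iff.mpr
          ((Matrix.isUnit_iff_isUnit_det _).mpr (isUnit_iff_ne_zero.mpr h)) hμ
      rw [det_char] at hdet
      simp [Matrix.vecHead, Matrix.vecTail] at hdet
      simp [hdet]
    · ext i j; fin_cases i <;> fin_cases j <;> simp [Matrix.vecHead, Matrix.vecTail]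
  · rintro ⟨L, U, hLM, hLlow, hLunit, hUM, hUup, hEq⟩
    have e01 : L 0 0 * U 0 1 = -1 := by
      have := congrFun (congrFun hEq 0) 1
      simp [Matrix.mul_apply, Fin.sum_univ_three, hLlow 0 1 (by decide),
        hLlow 0 2 (by decide)] at this
      linarith
    have e11 : L 1 0 * U 0 1 + L 1 1 * U 1 1 = 0 := by
      have := congrFun (congrFun hEq 1) 1
      simp [Matrix.mul_apply, Fin.sum_univ_three, hLlow 1 2 (by decide)] at this
      linarith
    have e21 : L 2 0 * U 0 1 + L 2 1 * U 1 1 = -1 := by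
      have := congrFun (congrFun hEq 2) 1
      simp [Matrix.mul_apply, Fin.sum_univ_three, hUup 2 1 (by decide)] at this
      linarith
    have hL11 : 0 < L 1 1 := by
      rcases lt_or_eq_of_le (diag_nonneg L hLM (Or.inl hLlow) 1) with h | h
      · exact h
      · exfalso
        have hdet : L.det = 0 := by
          rw [Matrix.det_fin_three, hLlow 0 1 (by decide), hLlow 0 2 (by decide),
            hLlow 1 2 (by decide), ← h]
          ring
        exact (isUnit_iff_ne_zero.mp ((Matrix.isUnit_iff_isUnit_det L).mp hLunit)) hdet
    have hL10 := offdiag_nonpos L hLM 1 0 (by decide)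
    have hL20 := offdiag_nonpos L hLM 2 0 (by decide)
    have hL21 := offdiag_nonpos L hLM 2 1 (by decide)
    have hU01 := offdiag_nonpos U hUM 0 1 (by decide)
    have hU11 := diag_nonneg U hUM (Or.inr hUup) 1
    -- L 1 0 * U 0 1 ≥ 0 and L 1 1 * U 1 1 ≥ 0, sum = 0 ⇒ U 1 1 = 0
    have h1 : 0 ≤ L 1 0 * U 0 1 := by nlinarith
    have h2 : 0 ≤ L 1 1 * U 1 1 := mul_nonneg hL11.le hU11
    have hU11z : U 1 1 = 0 := by
      have : L 1 1 * U 1 1 = 0 := by linarith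
      exact (mul_eq_zero.mp this).resolve_left hL11.ne'
    have h3 : 0 ≤ L 2 0 * U 0 1 := by nlinarith
    rw [hU11z, mul_zero, add_zero] at e21
    linarith
end

section
/- If L and U are n×n nonsingular M-matrices and the product LU is a Z-matrix, then LU is a nonsingular M-matrix. -/
open Matrix

section MAux

open Matrix Filter Finset Topology
open scoped ENNReal NNReal

attribute [local instance] Matrix.linftyOpNormedAddCommGroup Matrix.linftyOpNormedRing
  Matrix.linftyOpNormedAlgebra Matrix.linftyOpNormedSpace Matrix.linftyOpIsBoundedSMul

lemma specRad_nonneg' {m : Type*} [Fintype m] [DecidableEq m] (P : Matrix m m ℝ) :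
    0 ≤ specRad P :=
  Real.sSup_nonneg (by rintro r ⟨μ, _, rfl⟩; exact norm_nonneg μ)

lemma abs_le_specRad' {m : Type*} [Fintype m] [DecidableEq m] {P : Matrix m m ℝ}
    {μ : ℂ} (hμ : μ ∈ spectrum ℂ (P.map (Complex.ofReal))) :
    ‖μ‖ ≤ specRad P := by
  apply le_csSup
  · have hfin : {r : ℝ | ∃ μ ∈ spectrum ℂ (P.map (Complex.ofReal)), r = ‖μ‖}.Finite := by
      have h := (Matrix.finite_spectrum (P.map (Complex.ofReal))).image (‖·‖)
      refine h.subset ?_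
      rintro r ⟨μ, hμ, rfl⟩
      exact ⟨μ, hμ, rfl⟩
    exact hfin.bddAbove
  · exact ⟨μ, hμ, rfl⟩

lemma nnnorm_map_ofReal' {n : ℕ} (M : Matrix (Fin n) (Fin n) ℝ) :
    ‖M.map (Complex.ofReal)‖₊ = ‖M‖₊ := by
  simp [Matrix.linfty_opNNNorm_def, Matrix.map_apply]

lemma entry_continuous' {n : ℕ} (i j : Fin n) :
    Continuous (fun M : Matrix (Fin n) (Fin n) ℝ => M i j) := by
  let f : Matrix (Fin n) (Fin n) ℝ →+ ℝ :=
    { toFun := fun M => M i j, map_zero' := rfl, map_add' := fun _ _ => rfl }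
  refine AddMonoidHomClass.continuous_of_bound f 1 fun M => ?_
  rw [one_mul]
  have h1 : ‖M i j‖₊ ≤ ∑ j', ‖M i j'‖₊ :=
    Finset.single_le_sum (f := fun j' => ‖M i j'‖₊) (fun _ _ => zero_le) (Finset.mem_univ j)
  have h2 : (∑ j', ‖M i j'‖₊) ≤ Finset.univ.sup fun i => ∑ j', ‖M i j'‖₊ :=
    Finset.le_sup (f := fun i => ∑ j' : Fin n, ‖M i j'‖₊) (Finset.mem_univ i)
  have h3 := h1.trans h2
  rw [Matrix.linfty_opNorm_def]
  exact_mod_cast h3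

lemma neumann' {n : ℕ} [NeZero n] (x : Matrix (Fin n) (Fin n) ℝ)
    (hx : ∀ i j, 0 ≤ x i j)
    (hs : ∀ μ ∈ spectrum ℂ (x.map Complex.ofReal), ‖μ‖ < 1) :
    ∃ B : Matrix (Fin n) (Fin n) ℝ,
      (1 - x) * B = 1 ∧ B * (1 - x) = 1 ∧ ∀ i j, 0 ≤ B i j := by
  set xc := x.map (Complex.ofReal) with hxc
  have hρ : spectralRadius ℂ xc < 1 := by
    have h := spectrum.spectralRadius_lt_of_forall_lt xc (r := 1) (fun z hz => by
      have := hs z hz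
      rw [← coe_nnnorm] at this
      exact_mod_cast this)
    simpa using h
  obtain ⟨r, hr1, hr2⟩ := ENNReal.lt_iff_exists_nnreal_btwn.mp hρ
  have hr2' : r < 1 := by exact_mod_cast hr2
  have hG := spectrum.pow_nnnorm_pow_one_div_tendsto_nhds_spectralRadius xc
  have hev : ∀ᶠ k : ℕ in atTop, (‖xc ^ k‖₊ : ℝ≥0∞) ^ (1/(k:ℝ)) < (r : ℝ≥0∞) :=
    hG.eventually_lt_const hr1
  have hbound : ∀ᶠ k : ℕ in atTop, ‖x ^ k‖₊ ≤ r ^ k := by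
    filter_upwards [hev, eventually_ge_atTop 1] with k hk hk1
    have hk0 : (k : ℝ) ≠ 0 := by positivity
    have h1 : (‖xc ^ k‖₊ : ℝ≥0∞) ≤ (r : ℝ≥0∞) ^ (k : ℝ) := by
      have := ENNReal.rpow_le_rpow hk.le (by positivity : (0:ℝ) ≤ (k:ℝ))
      rwa [← ENNReal.rpow_mul, one_div, inv_mul_cancel₀ hk0, ENNReal.rpow_one] at this
    rw [ENNReal.rpow_natCast] at h1
    have h2 : ‖xc ^ k‖₊ ≤ r ^ k := by exact_mod_cast h1
    have h3 : xc ^ k = (x ^ k).map Complex.ofReal := by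
      have := map_pow (Complex.ofRealHom.mapMatrix (m := Fin n)) x k
      exact this.symm
    rwa [h3, nnnorm_map_ofReal'] at h2
  have hsum : Summable (fun k : ℕ => x ^ k) := by
    apply Summable.of_norm_bounded_eventually
      (summable_geometric_of_lt_one r.coe_nonneg (by exact_mod_cast hr2'))
    rw [Nat.cofinite_eq_atTop]
    filter_upwards [hbound] with k hk
    exact_mod_cast hk
  have hS := hsum.hasSum
  set S := ∑' k : ℕ, x ^ k with hSdef
  have hzero : Tendsto (fun N : ℕ => x ^ N) atTop (𝓝 0) := hsum.tendsto_atTop_zero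
  have htel : HasSum (fun k : ℕ => x ^ k - x ^ (k+1)) 1 := by
    have hsub : Summable (fun k : ℕ => x ^ k - x ^ (k+1)) :=
      hsum.sub ((summable_nat_add_iff 1).mpr hsum)
    rw [hsub.hasSum_iff_tendsto_nat]
    have heq : ∀ N : ℕ, ∑ k ∈ Finset.range N, (x ^ k - x ^ (k+1)) = 1 - x ^ N := by
      intro N
      rw [Finset.sum_range_sub' (fun k => x ^ k)]
      simp
    simp only [heq]
    simpa using tendsto_const_nhds.sub hzero
  have hleft : (1 - x) * S = 1 := by
    have h2 : HasSum (fun k : ℕ => (1 - x) * x ^ k) ((1 - x) * S) := hS.mul_left _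
    have h3 : (fun k : ℕ => (1 - x) * x ^ k) = fun k => x ^ k - x ^ (k+1) := by
      funext k
      rw [sub_mul, one_mul, pow_succ']
    rw [h3] at h2
    exact h2.unique htel
  have hright : S * (1 - x) = 1 := by
    have h2 : HasSum (fun k : ℕ => x ^ k * (1 - x)) (S * (1 - x)) := hS.mul_right _
    have h3 : (fun k : ℕ => x ^ k * (1 - x)) = fun k => x ^ k - x ^ (k+1) := by
      funext k
      rw [mul_sub, mul_one, pow_succ]
    rw [h3] at h2
    exact h2.unique htel
  refine ⟨S, hleft, hright, fun i j => ?_⟩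
  have hpow : ∀ (k : ℕ) (i j : Fin n), 0 ≤ (x ^ k) i j := by
    intro k
    induction k with
    | zero => intro i j; by_cases h : i = j <;> simp [Matrix.one_apply, h]
    | succ k ih =>
      intro i j
      rw [pow_succ, Matrix.mul_apply]
      exact Finset.sum_nonneg fun l _ => mul_nonneg (ih i l) (hx l j)
  have htend := ((entry_continuous' i j).continuousAt.tendsto).comp hS.tendsto_sum_nat
  refine ge_of_tendsto htend ?_
  filter_upwards with N
  simp only [Function.comp]
  rw [Matrix.sum_apply]
  exact Finset.sum_nonneg fun k _ => hpow k i j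

lemma mmatrix_inverse_nonneg' {n : ℕ} [NeZero n] {α : ℝ} {P : Matrix (Fin n) (Fin n) ℝ}
    (hP : ∀ i j, 0 ≤ P i j) (hα : specRad P ≤ α)
    (hA : IsUnit (α • (1 : Matrix (Fin n) (Fin n) ℝ) - P)) :
    ∀ i j : Fin n, 0 ≤ Ring.inverse (α • (1 : Matrix (Fin n) (Fin n) ℝ) - P) i j := by
  have hα0 : 0 ≤ α := (specRad_nonneg' P).trans hα
  have invt : ∀ t : ℝ, 0 < t → ∃ C : Matrix (Fin n) (Fin n) ℝ,
      ((α + t) • (1 : Matrix (Fin n) (Fin n) ℝ) - P) * C = 1 ∧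
      C * ((α + t) • (1 : Matrix (Fin n) (Fin n) ℝ) - P) = 1 ∧ ∀ i j, 0 ≤ C i j := by
    intro t ht
    have hc : 0 < α + t := by linarith
    have hx : ∀ i j, 0 ≤ ((α + t)⁻¹ • P) i j := by
      intro i j
      have h : ((α + t)⁻¹ • P) i j = (α + t)⁻¹ * P i j := rfl
      rw [h]
      exact mul_nonneg (inv_nonneg.mpr hc.le) (hP i j)
    have hmap : ((α + t)⁻¹ • P).map Complex.ofReal
        = (((α + t : ℝ) : ℂ))⁻¹ • (P.map Complex.ofReal) := by
      ext i j
      simp [Matrix.map_apply, Matrix.smul_apply, smul_eq_mul, Complex.ofReal_mul,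
        Complex.ofReal_inv]
    have hs : ∀ μ ∈ spectrum ℂ (((α + t)⁻¹ • P).map Complex.ofReal), ‖μ‖ < 1 := by
      intro μ hμ
      rw [hmap] at hμ
      have hcne : ((α + t : ℝ) : ℂ) ≠ 0 := by exact_mod_cast hc.ne'
      have hiff := spectrum.smul_mem_smul_iff (R := ℂ) (a := P.map Complex.ofReal)
        (s := ((α + t : ℝ) : ℂ) * μ) (r := (Units.mk0 _ hcne)⁻¹)
      have h1 : ((Units.mk0 _ hcne)⁻¹ : ℂˣ) • (((α + t : ℝ) : ℂ) * μ) = μ := by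
        rw [Units.smul_def, Units.val_inv_eq_inv_val, Units.val_mk0, smul_eq_mul, inv_mul_cancel_left₀ hcne]
      have h2 : ((Units.mk0 _ hcne)⁻¹ : ℂˣ) • (P.map Complex.ofReal)
          = (((α + t : ℝ) : ℂ))⁻¹ • (P.map Complex.ofReal) := by
        simp [Units.smul_def]
      rw [h1, h2] at hiff
      have hmem := hiff.mp hμ
      have habs : ‖(((α + t : ℝ) : ℂ) * μ)‖ ≤ α := (abs_le_specRad' hmem).trans hα
      rw [norm_mul, Complex.norm_real, Real.norm_eq_abs, abs_of_pos hc] at habs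
      nlinarith [norm_nonneg μ]
    obtain ⟨B, h1, h2, h3⟩ := neumann' ((α + t)⁻¹ • P) hx hs
    have hfact : (α + t) • (1 : Matrix (Fin n) (Fin n) ℝ) - P
        = (α + t) • (1 - (α + t)⁻¹ • P) := by
      rw [smul_sub, smul_smul, mul_inv_cancel₀ hc.ne', one_smul]
    refine ⟨(α + t)⁻¹ • B, ?_, ?_, fun i j => ?_⟩
    · rw [hfact, smul_mul_assoc, mul_smul_comm, smul_smul, mul_inv_cancel₀ hc.ne', one_smul, h1]
    · rw [hfact, mul_smul_comm, smul_mul_assoc, smul_smul, mul_inv_cancel₀ hc.ne', one_smul, h2]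
    · have h : ((α + t)⁻¹ • B) i j = (α + t)⁻¹ * B i j := rfl
      rw [h]
      exact mul_nonneg (inv_nonneg.mpr hc.le) (h3 i j)
  set A := α • (1 : Matrix (Fin n) (Fin n) ℝ) - P with hAdef
  have hcontf : Continuous (fun t : ℝ => (α + t) • (1 : Matrix (Fin n) (Fin n) ℝ) - P) :=
    ((continuous_const.add continuous_id).smul continuous_const).sub continuous_const
  have hcont : Tendsto (fun t : ℝ => (α + t) • (1 : Matrix (Fin n) (Fin n) ℝ) - P)
      (𝓝[>] (0:ℝ)) (𝓝 A) := by
    have h0 : (α + (0:ℝ)) • (1 : Matrix (Fin n) (Fin n) ℝ) - P = A := by rw [add_zero]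
    have h := hcontf.tendsto 0
    rw [h0] at h
    exact h.mono_left nhdsWithin_le_nhds
  have hinvc : ContinuousAt Ring.inverse A := by
    have h := NormedRing.inverse_continuousAt hA.unit
    rwa [hA.unit_spec] at h
  have hmain : Tendsto (fun t : ℝ => Ring.inverse ((α + t) • (1 : Matrix (Fin n) (Fin n) ℝ) - P))
      (𝓝[>] (0:ℝ)) (𝓝 (Ring.inverse A)) := hinvc.tendsto.comp hcont
  intro i j
  have htend := (entry_continuous' i j).continuousAt.tendsto.comp hmain
  refine ge_of_tendsto htend ?_
  filter_upwards [self_mem_nhdsWithin] with t ht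
  obtain ⟨C, h1, h2, h3⟩ := invt t ht
  have hu : Ring.inverse ((α + t) • (1 : Matrix (Fin n) (Fin n) ℝ) - P) = C := by
    let u : (Matrix (Fin n) (Fin n) ℝ)ˣ := ⟨_, C, h1, h2⟩
    exact Ring.inverse_unit u
  show 0 ≤ Ring.inverse ((α + t) • (1 : Matrix (Fin n) (Fin n) ℝ) - P) i j
  rw [hu]
  exact h3 i j

end MAux
/-- If `L` and `U` are nonsingular M-matrices and `L * U` is a Z-matrix,
then `L * U` is a nonsingular M-matrix. -/
theorem stmt13 {n : ℕ} (L U : Matrix (Fin n) (Fin n) ℝ)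
    (hL : IsMMatrix L) (hLu : IsUnit L) (hU : IsMMatrix U) (hUu : IsUnit U)
    (hZ : ∀ i j : Fin n, i ≠ j → (L * U) i j ≤ 0) :
    IsMMatrix (L * U) ∧ IsUnit (L * U) := by
  refine ⟨?_, hLu.mul hUu⟩
  rcases Nat.eq_zero_or_pos n with hn | hn
  · subst hn
    haveI : Subsingleton (Matrix (Fin 0) (Fin 0) ℝ) := ⟨fun a b => by ext i; exact i.elim0⟩
    haveI : Subsingleton (Matrix (Fin 0) (Fin 0) ℂ) := ⟨fun a b => by ext i; exact i.elim0⟩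
    refine ⟨0, 0, fun i j => le_refl 0, le_of_eq ?_, Subsingleton.elim _ _⟩
    show specRad (0 : Matrix (Fin 0) (Fin 0) ℝ) = 0
    rw [specRad]
    convert Real.sSup_empty using 2
    rw [Set.eq_empty_iff_forall_notMem]
    rintro r ⟨μ, hμ, rfl⟩
    exact spectrum.mem_iff.mp hμ (isUnit_of_subsingleton _)
  haveI : NeZero n := ⟨hn.ne'⟩
  haveI : Nonempty (Fin n) := Fin.pos_iff_nonempty.mp hn
  obtain ⟨αL, PL, hPL, hαL, hLeq⟩ := hL
  obtain ⟨αU, PU, hPU, hαU, hUeq⟩ := hU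
  have hBL : ∀ i j, 0 ≤ Ring.inverse L i j := by
    rw [hLeq]
    exact mmatrix_inverse_nonneg' hPL hαL (hLeq ▸ hLu)
  have hBU : ∀ i j, 0 ≤ Ring.inverse U i j := by
    rw [hUeq]
    exact mmatrix_inverse_nonneg' hPU hαU (hUeq ▸ hUu)
  set BL := Ring.inverse L with hBLdef
  set BU := Ring.inverse U with hBUdef
  have hL1 : L * BL = 1 := Ring.mul_inverse_cancel _ hLu
  have hL2 : BL * L = 1 := Ring.inverse_mul_cancel _ hLu
  have hU1 : U * BU = 1 := Ring.mul_inverse_cancel _ hUu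
  have hU2 : BU * U = 1 := Ring.inverse_mul_cancel _ hUu
  set M := BU * BL with hMdef
  have hM1 : (L * U) * M = 1 := by
    rw [hMdef, mul_assoc, ← mul_assoc U, hU1, one_mul, hL1]
  have hM2 : M * (L * U) = 1 := by
    rw [hMdef, mul_assoc, ← mul_assoc BL, hL2, one_mul, hU2]
  have hMnn : ∀ i j, 0 ≤ M i j := by
    intro i j
    rw [hMdef, Matrix.mul_apply]
    exact Finset.sum_nonneg fun l _ => mul_nonneg (hBU i l) (hBL l j)
  set x : Fin n → ℝ := M *ᵥ (fun _ => 1) with hxdef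
  have hx : ∀ i, 0 < x i := by
    intro i
    have hrow : ∃ l, 0 < M i l := by
      by_contra h
      push_neg at h
      have hzero : (M * (L * U)) i i = 0 := by
        rw [Matrix.mul_apply]
        apply Finset.sum_eq_zero
        intro l _
        rw [le_antisymm (h l) (hMnn i l), zero_mul]
      rw [hM2] at hzero
      simp [Matrix.one_apply] at hzero
    obtain ⟨l, hl⟩ := hrow
    have hxi : x i = ∑ j, M i j := by
      simp [hxdef, Matrix.mulVec, dotProduct]
    rw [hxi]
    exact Finset.sum_pos' (fun j _ => hMnn i j) ⟨l, Finset.mem_univ l, hl⟩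
  have hLUx : (L * U) *ᵥ x = fun _ => 1 := by
    rw [hxdef, Matrix.mulVec_mulVec, hM1, Matrix.one_mulVec]
  set α : ℝ := 1 + ∑ i, |(L * U) i i| with hαdef
  have hα0 : 0 < α := by
    have : 0 ≤ ∑ i, |(L * U) i i| := Finset.sum_nonneg fun i _ => abs_nonneg _
    rw [hαdef]; linarith
  have hdiag : ∀ i, (L * U) i i ≤ α := by
    intro i
    have h1 : |(L * U) i i| ≤ ∑ j, |(L * U) j j| :=
      Finset.single_le_sum (f := fun j => |(L * U) j j|) (fun _ _ => abs_nonneg _)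
        (Finset.mem_univ i)
    have h2 : (L * U) i i ≤ |(L * U) i i| := le_abs_self _
    rw [hαdef]; linarith
  set P : Matrix (Fin n) (Fin n) ℝ := α • (1 : Matrix (Fin n) (Fin n) ℝ) - L * U with hPdef
  have hPnn : ∀ i j, 0 ≤ P i j := by
    intro i j
    rw [hPdef]
    by_cases h : i = j
    · subst h
      have : (α • (1 : Matrix (Fin n) (Fin n) ℝ) - L * U) i i = α - (L * U) i i := by
        simp [Matrix.sub_apply, Matrix.smul_apply, Matrix.one_apply, smul_eq_mul]
      rw [this]
      linarith [hdiag i]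
    · have : (α • (1 : Matrix (Fin n) (Fin n) ℝ) - L * U) i j = -(L * U) i j := by
        simp [Matrix.sub_apply, Matrix.smul_apply, Matrix.one_apply_ne h, smul_eq_mul]
      rw [this]
      linarith [hZ i j h]
  refine ⟨α, P, hPnn, ?_, by rw [hPdef, sub_sub_cancel]⟩
  apply Real.sSup_le _ hα0.le
  rintro r ⟨μ, hμ, rfl⟩
  -- get an eigenvector
  set Pc := P.map Complex.ofReal with hPcdef
  have hdet : ((algebraMap ℂ (Matrix (Fin n) (Fin n) ℂ)) μ - Pc).det = 0 := by
    by_contra hd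
    exact (spectrum.mem_iff.mp hμ) ((Matrix.isUnit_iff_isUnit_det _).mpr (Ne.isUnit hd))
  obtain ⟨v, hv0, hveq⟩ := Matrix.exists_mulVec_eq_zero_iff.mpr hdet
  have hPv : Pc *ᵥ v = μ • v := by
    have h1 : (algebraMap ℂ (Matrix (Fin n) (Fin n) ℂ)) μ *ᵥ v - Pc *ᵥ v = 0 := by
      rw [← Matrix.sub_mulVec, hveq]
    have h2 : (algebraMap ℂ (Matrix (Fin n) (Fin n) ℂ)) μ *ᵥ v = μ • v := by
      rw [Algebra.algebraMap_eq_smul_one, Matrix.smul_mulVec, Matrix.one_mulVec]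
    rw [h2] at h1
    exact (sub_eq_zero.mp h1).symm
  obtain ⟨i₀, -, hmax⟩ := Finset.exists_max_image Finset.univ
    (fun i => ‖v i‖ / x i) ⟨Classical.arbitrary _, Finset.mem_univ _⟩
  set c := ‖v i₀‖ / x i₀ with hcdef
  obtain ⟨j₀, hj₀⟩ := Function.ne_iff.mp hv0
  have hcpos : 0 < c := by
    have h1 : 0 < ‖v j₀‖ / x j₀ :=
      div_pos (norm_pos_iff.mpr hj₀) (hx j₀)
    exact lt_of_lt_of_le h1 (hmax j₀ (Finset.mem_univ j₀))
  have hvle : ∀ j, ‖v j‖ ≤ c * x j := by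
    intro j
    have h := hmax j (Finset.mem_univ j)
    rw [div_le_iff₀ (hx j)] at h
    linarith [h]
  have hvi : ‖v i₀‖ = c * x i₀ := by
    rw [hcdef, div_mul_cancel₀]
    exact (hx i₀).ne'
  have hrow : (∑ j, Pc i₀ j * v j) = μ * v i₀ := by
    have h := congrFun hPv i₀
    simpa [Matrix.mulVec, dotProduct] using h
  have hPx : (P *ᵥ x) i₀ = α * x i₀ - 1 := by
    have h1 : P *ᵥ x = α • x - (L * U) *ᵥ x := by
      rw [hPdef, Matrix.sub_mulVec, Matrix.smul_mulVec, Matrix.one_mulVec]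
    rw [h1, hLUx]
    simp [Pi.sub_apply, Pi.smul_apply, smul_eq_mul]
  have hchain : ‖μ‖ * (c * x i₀) ≤ c * (α * x i₀ - 1) := by
    calc ‖μ‖ * (c * x i₀) = ‖μ * v i₀‖ := by
          rw [norm_mul, hvi]
      _ = ‖∑ j, Pc i₀ j * v j‖ := by rw [hrow]
      _ ≤ ∑ j, ‖Pc i₀ j * v j‖ := norm_sum_le _ _
      _ = ∑ j, P i₀ j * ‖v j‖ := by
          apply Finset.sum_congr rfl
          intro j _
          rw [norm_mul, hPcdef]
          simp [Matrix.map_apply, Complex.norm_real, Real.norm_eq_abs, abs_of_nonneg (hPnn i₀ j)]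
      _ ≤ ∑ j, P i₀ j * (c * x j) := by
          apply Finset.sum_le_sum
          intro j _
          exact mul_le_mul_of_nonneg_left (hvle j) (hPnn i₀ j)
      _ = c * (P *ᵥ x) i₀ := by
          have h : (P *ᵥ x) i₀ = ∑ j, P i₀ j * x j := by
            simp [Matrix.mulVec, dotProduct]
          rw [h, Finset.mul_sum]
          apply Finset.sum_congr rfl
          intro j _
          ring
      _ = c * (α * x i₀ - 1) := by rw [hPx]
  nlinarith [hcpos, hx i₀, norm_nonneg μ, mul_pos hcpos (hx i₀)]
end

section
/- Let A be an n×n M-matrix with A = LU, L and U M-matrices, and let S be a singular class of L. Suppose r ∈ S and t ∉ S satisfy (L_{rS} U_{St}) < 0 (the r-row of L restricted to columns S times the S-rows of U in column t is negative). Then there exists s ∈ S with L_{st} ≠ 0. -/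
open Matrix

private lemma mm_offdiag {m : Type*} [Fintype m] [DecidableEq m] {A : Matrix m m ℝ}
    (hA : IsMMatrix A) {i j : m} (hij : i ≠ j) : A i j ≤ 0 := by
  obtain ⟨α, P, hP, -, rfl⟩ := hA
  simp [Matrix.sub_apply, Matrix.one_apply, hij]
  exact hP i j

private lemma rtg_propagate {ι : Type*} {edge : ι → ι → Prop} {Good : ι → Prop}
    (hstep : ∀ a b, Good a → edge a b → Good b) {a b : ι}
    (h : Relation.ReflTransGen edge a b) (ha : Good a) : Good b := by
  induction h with
  | refl => exact ha
  | tail _ hbc ih => exact hstep _ _ ih hbc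

private lemma access_within {n : ℕ} (L : Matrix (Fin n) (Fin n) ℝ) (S : Finset (Fin n))
    (p : Fin n) (hp : ∀ q : Fin n, q ∈ S ↔ (Access L p q ∧ Access L q p))
    {a b : Fin n} (hab : Access L a b) (ha : a ∈ S) (hb : b ∈ S) :
    Relation.ReflTransGen (fun s k : {x // x ∈ S} => L s k ≠ 0) ⟨a, ha⟩ ⟨b, hb⟩ := by
  have hab' : Relation.ReflTransGen (fun i j => L i j ≠ 0) a b := hab
  clear hab
  revert ha
  induction hab' using Relation.ReflTransGen.head_induction_on with
  | refl => intro ha; exact Relation.ReflTransGen.refl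
  | head h' htail ih =>
    intro ha
    rename_i a' c
    have hc : c ∈ S := by
      refine (hp c).mpr ⟨?_, ?_⟩
      · exact Relation.ReflTransGen.tail ((hp a').mp ha).1 h'
      · exact Relation.ReflTransGen.trans htail ((hp b).mp hb).2
    exact Relation.ReflTransGen.head (show L ((⟨a', ha⟩ : {x // x ∈ S}) : Fin n) c ≠ 0 from h') (ih hc)


/-- If `A = L * U` with `A, L, U` M-matrices, `S` a singular class of `L`, `r ∈ S`,
`t ∉ S`, and `L_{rS} U_{St} < 0`, then `L s t ≠ 0` for some `s ∈ S`. -/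
theorem stmt15 {n : ℕ} (A L U : Matrix (Fin n) (Fin n) ℝ)
    (hA : IsMMatrix A) (hL : IsMMatrix L) (hU : IsMMatrix U) (hfact : A = L * U)
    (S : Finset (Fin n)) (hS : IsSingClass L S)
    (r t : Fin n) (hr : r ∈ S) (ht : t ∉ S)
    (hneg : ∑ s ∈ S, L r s * U s t < 0) :
    ∃ s ∈ S, L s t ≠ 0 := by
  by_contra hcon
  push_neg at hcon
  obtain ⟨⟨p, hp⟩, hdet⟩ := hS
  have hLmm := hL
  obtain ⟨α, P, hP, -, hLdef⟩ := hL
  have hst : ∀ s : {x // x ∈ S}, (s : Fin n) ≠ t := fun s h => ht (h ▸ s.2)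
  set y : {x // x ∈ S} → ℝ := fun s => -U s t with hy
  have hy0 : ∀ s, 0 ≤ y s := fun s => neg_nonneg.2 (mm_offdiag hU (hst s))
  set Q : {x // x ∈ S} → {x // x ∈ S} → ℝ := fun s k => P s k with hQdef
  have hQ0 : ∀ s k, 0 ≤ Q s k := fun s k => hP _ _
  have hLQ : ∀ s k : {x // x ∈ S}, L s k = (if s = k then α else 0) - Q s k := by
    intro s k
    rw [hLdef]
    by_cases h : s = k
    · simp [h, Matrix.sub_apply, Matrix.one_apply, hQdef]
    · have h' : (s : Fin n) ≠ (k : Fin n) := fun hh => h (Subtype.ext hh)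
      simp [h, h', Matrix.sub_apply, Matrix.one_apply, hQdef]
  -- v ≤ 0 on S
  have key : ∀ s : {x // x ∈ S}, ∑ k : {x // x ∈ S}, L s k * U k t ≤ 0 := by
    intro s
    have h1 : ∑ k : {x // x ∈ S}, L s k * U k t = ∑ k ∈ S, L s k * U k t :=
      Finset.sum_coe_sort S (fun k => L (s : Fin n) k * U k t)
    have h2 : ∑ k ∈ S, L s k * U k t + ∑ k ∈ Sᶜ, L s k * U k t
        = ∑ k, L (s : Fin n) k * U k t := Finset.sum_add_sum_compl S _
    have h3 : ∑ k, L (s : Fin n) k * U k t = A s t := by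
      rw [hfact, Matrix.mul_apply]
    have h4 : A (s : Fin n) t ≤ 0 := mm_offdiag hA (hst s)
    have h5 : 0 ≤ ∑ k ∈ Sᶜ, L (s : Fin n) k * U k t := by
      refine Finset.sum_nonneg fun k hk => ?_
      have hkS : k ∉ S := Finset.mem_compl.mp hk
      by_cases hkt : k = t
      · subst hkt
        rw [hcon (s : Fin n) s.2, zero_mul]
      · have hsk : (s : Fin n) ≠ k := fun h => hkS (h ▸ s.2)
        have := mul_nonneg (neg_nonneg.2 (mm_offdiag hLmm hsk)) (neg_nonneg.2 (mm_offdiag hU hkt))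
        rw [neg_mul_neg] at this
        exact this
    linarith
  have keyr : ∑ k : {x // x ∈ S}, L r k * U k t < 0 := by
    have h1 : ∑ k : {x // x ∈ S}, L r k * U k t = ∑ k ∈ S, L r k * U k t :=
      Finset.sum_coe_sort S (fun k => L r k * U k t)
    rw [h1]; exact hneg
  -- translate to Q, y form
  have hsum : ∀ s : {x // x ∈ S},
      ∑ k : {x // x ∈ S}, L s k * U k t = (∑ k, Q s k * y k) - α * y s := by
    intro s
    have : ∀ k : {x // x ∈ S}, L s k * U k t
        = (if s = k then α * U k t else 0) - Q s k * U k t := by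
      intro k
      rw [hLQ s k, sub_mul]
      by_cases h : s = k <;> simp [h]
    have e1 : ∑ k : {x // x ∈ S}, (if s = k then α * U k t else 0) = α * U s t := by
      rw [Finset.sum_ite_eq Finset.univ s (fun k => α * U (k : Fin n) t)]
      simp
    have e2 : ∑ k : {x // x ∈ S}, Q s k * U k t = -∑ k : {x // x ∈ S}, Q s k * y k := by
      rw [← Finset.sum_neg_distrib]
      exact Finset.sum_congr rfl fun k _ => by simp [hy]
    rw [Finset.sum_congr rfl fun k _ => this k, Finset.sum_sub_distrib, e1, e2]
    simp [hy]
    ring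
  have hQy : ∀ s : {x // x ∈ S}, ∑ k, Q s k * y k ≤ α * y s := by
    intro s; have := key s; rw [hsum s] at this; linarith
  have hQyr : ∑ k, Q ⟨r, hr⟩ k * y k < α * y ⟨r, hr⟩ := by
    have := keyr; rw [hsum ⟨r, hr⟩] at this; linarith
  have hQy_nn : ∀ s : {x // x ∈ S}, 0 ≤ ∑ k, Q s k * y k :=
    fun s => Finset.sum_nonneg fun k _ => mul_nonneg (hQ0 s k) (hy0 k)
  have hαyr : 0 < α * y ⟨r, hr⟩ := lt_of_le_of_lt (hQy_nn _) hQyr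
  have hyr : 0 < y ⟨r, hr⟩ := by
    rcases (hy0 ⟨r, hr⟩).lt_or_eq with h | h
    · exact h
    · exfalso; rw [← h, mul_zero] at hαyr; exact lt_irrefl 0 hαyr
  have hα : 0 < α := by
    by_contra h
    push_neg at h
    nlinarith
  -- edges give positive Q entries
  have hedge : ∀ a b : {x // x ∈ S}, a ≠ b → L a b ≠ 0 → 0 < Q a b := by
    intro a b hab h
    have h' : (a : Fin n) ≠ (b : Fin n) := fun hh => hab (Subtype.ext hh)
    have h1 : L (a : Fin n) b ≤ 0 := mm_offdiag hLmm h'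
    have h2 := hLQ a b
    rw [if_neg hab, zero_sub] at h2
    rcases (hQ0 a b).lt_or_eq with hq | hq
    · exact hq
    · exfalso; apply h; rw [h2, ← hq, neg_zero]
  -- access to r within S
  have hacc : ∀ s : {x // x ∈ S},
      Relation.ReflTransGen (fun a b : {x // x ∈ S} => L a b ≠ 0) s ⟨r, hr⟩ := by
    intro s
    have h1 : Access L s r :=
      Relation.ReflTransGen.trans ((hp s).mp s.2).2 ((hp r).mp hr).1
    have := access_within L S p hp h1 s.2 hr
    exact this
  -- Step A: y is positive everywhere on S
  have hypos : ∀ s : {x // x ∈ S}, 0 < y s := by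
    intro s
    rcases (hy0 s).lt_or_eq with h | h
    · exact h
    exfalso
    have hzero : y ⟨r, hr⟩ = 0 := by
      refine rtg_propagate (Good := fun a => y a = 0) ?_ (hacc s) h.symm
      intro a b hga hab
      by_cases hab' : a = b
      · exact hab' ▸ hga
      have hQab : 0 < Q a b := hedge a b hab' hab
      have hsum0 : ∑ k, Q a k * y k = 0 := by
        have h1 := hQy a
        rw [hga, mul_zero] at h1
        exact le_antisymm h1 (hQy_nn a)
      have := (Finset.sum_eq_zero_iff_of_nonneg
        (fun k _ => mul_nonneg (hQ0 a k) (hy0 k))).mp hsum0 b (Finset.mem_univ b)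
      rcases mul_eq_zero.mp this with h' | h'
      · exact absurd h' (ne_of_gt hQab)
      · exact h'
    exact (ne_of_gt hyr) hzero
  -- kernel vector of L_SS
  have hker : ∃ u : {x // x ∈ S} → ℝ, u ≠ 0 ∧
      ∀ s : {x // x ∈ S}, ∑ k : {x // x ∈ S}, L s k * u k = 0 := by
    obtain ⟨u, hu0, hu⟩ := (Matrix.exists_mulVec_eq_zero_iff).mpr hdet
    refine ⟨u, hu0, fun s => ?_⟩
    have := congrFun hu s
    simpa [Matrix.mulVec, dotProduct, Matrix.submatrix_apply] using this
  obtain ⟨u, hu0, hu⟩ := hker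
  set w : {x // x ∈ S} → ℝ := fun s => |u s| with hw
  have hαw : ∀ s, α * w s ≤ ∑ k, Q s k * w k := by
    intro s
    have h1 : α * u s = ∑ k, Q s k * u k := by
      have h2 := hu s
      have h3 : ∀ k : {x // x ∈ S}, L s k * u k
          = (if s = k then α * u k else 0) - Q s k * u k := by
        intro k
        rw [hLQ s k, sub_mul]
        by_cases h : s = k <;> simp [h]
      rw [Finset.sum_congr rfl fun k _ => h3 k, Finset.sum_sub_distrib,
        Finset.sum_ite_eq Finset.univ s (fun k => α * u k)] at h2
      simp at h2
      rw [Finset.univ_eq_attach]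
      linarith
    calc α * w s = |α * u s| := by rw [abs_mul, abs_of_pos hα]
    _ = |∑ k, Q s k * u k| := by rw [h1]
    _ ≤ ∑ k, |Q s k * u k| := Finset.abs_sum_le_sum_abs _ _
    _ = ∑ k, Q s k * w k := by
        refine Finset.sum_congr rfl fun k _ => ?_
        rw [abs_mul, abs_of_nonneg (hQ0 s k)]
  -- maximal ratio
  obtain ⟨s0, -, hs0⟩ := Finset.exists_max_image Finset.univ (fun s => w s / y s)
    ⟨⟨r, hr⟩, Finset.mem_univ _⟩
  set c : ℝ := w s0 / y s0 with hc
  have hwle : ∀ s, w s ≤ c * y s := by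
    intro s
    have := hs0 s (Finset.mem_univ s)
    rw [div_le_iff₀ (hypos s)] at this
    linarith [this]
  have hws0 : w s0 = c * y s0 := by
    rw [hc, div_mul_cancel₀]
    exact ne_of_gt (hypos s0)
  have hcpos : 0 < c := by
    obtain ⟨s1, hs1⟩ := Function.ne_iff.mp hu0
    have hws1 : 0 < w s1 := abs_pos.mpr hs1
    have := hs0 s1 (Finset.mem_univ s1)
    have h1 : 0 < w s1 / y s1 := div_pos hws1 (hypos s1)
    linarith
  -- key claim: ratio equality propagates along edges
  have hstep : ∀ a b : {x // x ∈ S}, w a = c * y a → L a b ≠ 0 → w b = c * y b := by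
    intro a b hga hab
    by_cases hab' : a = b
    · exact hab' ▸ hga
    have hQab : 0 < Q a b := hedge a b hab' hab
    have h1 : α * w a ≤ ∑ k, Q a k * w k := hαw a
    have h2 : ∑ k, Q a k * w k ≤ ∑ k, Q a k * (c * y k) :=
      Finset.sum_le_sum fun k _ => mul_le_mul_of_nonneg_left (hwle k) (hQ0 a k)
    have h3 : ∑ k, Q a k * (c * y k) = c * ∑ k, Q a k * y k := by
      rw [Finset.mul_sum]; exact Finset.sum_congr rfl fun k _ => by ring
    have h4 : c * ∑ k, Q a k * y k ≤ c * (α * y a) :=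
      mul_le_mul_of_nonneg_left (hQy a) (le_of_lt hcpos)
    have h5 : c * (α * y a) = α * w a := by rw [hga]; ring
    have heq : ∑ k, Q a k * w k = ∑ k, Q a k * (c * y k) := by linarith
    have hsum0 : ∑ k, Q a k * (c * y k - w k) = 0 := by
      rw [Finset.sum_congr rfl (fun k _ => by ring :
        ∀ k ∈ Finset.univ, Q a k * (c * y k - w k) = Q a k * (c * y k) - Q a k * w k),
        Finset.sum_sub_distrib, heq, sub_self]
    have := (Finset.sum_eq_zero_iff_of_nonneg
      (fun k _ => mul_nonneg (hQ0 a k) (by linarith [hwle k]))).mp hsum0 b (Finset.mem_univ b)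
    rcases mul_eq_zero.mp this with h' | h'
    · exact absurd h' (ne_of_gt hQab)
    · linarith
  -- propagate to r and contradict strictness
  have hwr : w ⟨r, hr⟩ = c * y ⟨r, hr⟩ := rtg_propagate hstep (hacc s0) hws0
  have h1 : α * w ⟨r, hr⟩ ≤ ∑ k, Q ⟨r, hr⟩ k * w k := hαw _
  have h2 : ∑ k, Q ⟨r, hr⟩ k * w k ≤ ∑ k, Q ⟨r, hr⟩ k * (c * y k) :=
    Finset.sum_le_sum fun k _ => mul_le_mul_of_nonneg_left (hwle k) (hQ0 _ k)
  have h3 : ∑ k, Q ⟨r, hr⟩ k * (c * y k) = c * ∑ k, Q ⟨r, hr⟩ k * y k := by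
    rw [Finset.mul_sum]; exact Finset.sum_congr rfl fun k _ => by ring
  have h4 : c * ∑ k, Q ⟨r, hr⟩ k * y k < c * (α * y ⟨r, hr⟩) :=
    mul_lt_mul_of_pos_left hQyr hcpos
  have h5 : c * (α * y ⟨r, hr⟩) = α * w ⟨r, hr⟩ := by rw [hwr]; ring
  linarith
end

section
/- Let X be an n×n real matrix. The set of order preserving partitions Υ = (υ_1,…,υ_r) of {1,…,n} with respect to which X is block lower triangular (i.e., X_{υ_i, υ_i^+} = 0 for all i, where υ_i^+ = { l : l > max(υ_i) }) is closed under greatest lower bounds in the refinement lattice: the greatest lower bound of any two such partitions (whose parts are the nonempty intersections of parts) again makes X block lower triangular. Hence there is a unique finest order preserving partition with respect to which X is block lower triangular. -/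
open Matrix

/-- An order preserving partition of `Fin n`, encoded as an equivalence relation
whose classes are convex (intervals). -/
def ConvexEquiv {n : ℕ} (r : Fin n → Fin n → Prop) : Prop :=
  Equivalence r ∧ ∀ i j k : Fin n, r i k → i ≤ j → j ≤ k → r i j

/-- `X` is block lower triangular with respect to the order preserving partition `r`. -/
def BlockLowerTri {n : ℕ} (X : Matrix (Fin n) (Fin n) ℝ)
    (r : Fin n → Fin n → Prop) : Prop :=
  ∀ i j : Fin n, i < j → ¬ r i j → X i j = 0

/-- `X` is block upper triangular with respect to the order preserving partition `r`. -/
def BlockUpperTri {n : ℕ} (X : Matrix (Fin n) (Fin n) ℝ)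
    (r : Fin n → Fin n → Prop) : Prop :=
  ∀ i j : Fin n, j < i → ¬ r i j → X i j = 0

/-- The order preserving partitions with respect to which `X` is block lower triangular
are closed under greatest lower bounds (intersections), and hence there is a finest
such partition: the block lower triangular self-partition of `X`. -/
theorem stmt17 {n : ℕ} (X : Matrix (Fin n) (Fin n) ℝ) :
    (∀ r₁ r₂ : Fin n → Fin n → Prop,
        ConvexEquiv r₁ → BlockLowerTri X r₁ → ConvexEquiv r₂ → BlockLowerTri X r₂ →
        ConvexEquiv (fun i j => r₁ i j ∧ r₂ i j) ∧
        BlockLowerTri X (fun i j => r₁ i j ∧ r₂ i j)) ∧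
    (∃ r : Fin n → Fin n → Prop, ConvexEquiv r ∧ BlockLowerTri X r ∧
        ∀ r' : Fin n → Fin n → Prop, ConvexEquiv r' → BlockLowerTri X r' →
          ∀ i j : Fin n, r i j → r' i j) := by
  constructor
  · rintro r₁ r₂ ⟨⟨h1r, h1s, h1t⟩, h1c⟩ hb1 ⟨⟨h2r, h2s, h2t⟩, h2c⟩ hb2
    refine ⟨⟨⟨fun i => ⟨h1r i, h2r i⟩, fun h => ⟨h1s h.1, h2s h.2⟩,
      fun h h' => ⟨h1t h.1 h'.1, h2t h.2 h'.2⟩⟩,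
      fun i j k h hij hjk => ⟨h1c i j k h.1 hij hjk, h2c i j k h.2 hij hjk⟩⟩, ?_⟩
    intro i j hij hnr
    rcases not_and_or.mp hnr with h | h
    · exact hb1 i j hij h
    · exact hb2 i j hij h
  · refine ⟨fun i j => ∀ r' : Fin n → Fin n → Prop,
      ConvexEquiv r' → BlockLowerTri X r' → r' i j, ?_, ?_, ?_⟩
    · refine ⟨⟨fun i r' hc hb => hc.1.refl i,
        fun h r' hc hb => hc.1.symm (h r' hc hb),
        fun h h' r' hc hb => hc.1.trans (h r' hc hb) (h' r' hc hb)⟩,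
        fun i j k h hij hjk r' hc hb => hc.2 i j k (h r' hc hb) hij hjk⟩
    · intro i j hij hnr
      obtain ⟨r', h⟩ := not_forall.mp hnr
      rw [Classical.not_imp, Classical.not_imp] at h
      obtain ⟨hc, hb, hnr⟩ := h
      exact hb i j hij hnr
    · exact fun r' hc hb i j h => h r' hc hb
end
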